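/- arXiv:1007.1185 — 6 statements merged into one kernel-verified Lean document; each statement's English description precedes it below -/
import Mathlib

section
/- Let 0<α<1, 1<p<1/α, q=p/(1-αp), and let θ₁, θ₂ be positive numbers with θ₂ < θ₁(1+αq). Then the Riesz potential operator I_α is not bounded from L^{p),θ₁}([0,1]) to L^{q),θ₂}([0,1]): there is no constant c>0 such that ‖I_α f‖_{L^{q),θ₂}([0,1])} ≤ c‖f‖_{L^{p),θ₁}([0,1])} holds for all nonnegative measurable f on [0,1]; in fact, for every c>0 there exists a subinterval J ⊆ [0,1] such that ‖I_α χ_J‖_{L^{q),θ₂}([0,1])} > c‖χ_J‖_{L^{p),θ₁}([0,1])}. -/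
open MeasureTheory Set
open scoped ENNReal

/-- Grand Lebesgue norm on `[0,1]` of an `ℝ≥0∞`-valued function:
`sup_{0<ε<p-1} (ε^θ ∫₀¹ f(t)^{p-ε} dt)^{1/(p-ε)}`. -/
noncomputable def grandNormE (p θ : ℝ) (f : ℝ → ℝ≥0∞) : ℝ≥0∞ :=
  ⨆ ε ∈ Set.Ioo (0 : ℝ) (p - 1),
    (ENNReal.ofReal (ε ^ θ) * ∫⁻ t in Set.Icc (0 : ℝ) 1, f t ^ (p - ε)) ^ (1 / (p - ε))

/-- Grand Lebesgue norm on `[0,1]` of a real function. -/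
noncomputable def grandNorm (p θ : ℝ) (f : ℝ → ℝ) : ℝ≥0∞ :=
  grandNormE p θ (fun t => ENNReal.ofReal |f t|)

/-- The Riesz potential `(I_α f)(x) = ∫₀¹ f(y)/|x-y|^{1-α} dy` of a nonnegative
function, with values in `ℝ≥0∞`. -/
noncomputable def rieszPotential (α : ℝ) (f : ℝ → ℝ) (x : ℝ) : ℝ≥0∞ :=
  ∫⁻ y in Set.Icc (0 : ℝ) 1, ENNReal.ofReal (f y) / ENNReal.ofReal (|x - y| ^ (1 - α))

section Aux

open Real Filter

lemma aux_rpow_rpow (x a b : ℝ) (hx : 0 ≤ x) : (x ^ a) ^ b = x ^ (a * b) :=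
  (Real.rpow_mul hx a b).symm

lemma aux_ind_rpow (δ x e : ℝ) (he : 0 < e) :
    ENNReal.ofReal |((Set.Icc (0:ℝ) δ).indicator 1) x| ^ e
      = (Set.Icc (0:ℝ) δ).indicator (fun _ => (1:ℝ≥0∞)) x := by
  by_cases hx : x ∈ Set.Icc (0:ℝ) δ <;>
    simp [hx, Set.indicator_of_mem, Set.indicator_of_notMem,
      ENNReal.zero_rpow_of_pos he]

lemma aux_lint_ind_c (δ : ℝ) (hδ1 : δ ≤ 1) (c : ℝ≥0∞) :
    ∫⁻ t in Set.Icc (0:ℝ) 1, (Set.Icc (0:ℝ) δ).indicator (fun _ => c) t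
      = c * ENNReal.ofReal δ := by
  rw [lintegral_indicator measurableSet_Icc, Measure.restrict_restrict measurableSet_Icc,
    Set.inter_eq_self_of_subset_left (Set.Icc_subset_Icc le_rfl hδ1), setLIntegral_const,
    Real.volume_Icc, sub_zero]

lemma aux_real_upper (p θ s r L ε : ℝ) (hp : 1 < p) (hθ : 0 < θ) (hs : 0 < s)
    (hr : r = s * p / θ) (hL1 : 1 ≤ L) (hLp : θ * Real.log p ≤ L)
    (hbig : p ^ (2 * θ / p) * Real.exp (-(L ^ (1 - r)) / p ^ 2) ≤ L ^ (-s))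
    (hε : ε ∈ Set.Ioo 0 (p - 1)) :
    (ε ^ θ * Real.exp (-L)) ^ (1 / (p - ε)) ≤ L ^ (-s) * Real.exp (-L / p) := by
  obtain ⟨hε0, hε1⟩ := hε
  have hLpos : (0:ℝ) < L := lt_of_lt_of_le one_pos hL1
  have hp0 : (0:ℝ) < p := by linarith
  have hpε : 0 < p - ε := by linarith
  have hrpos : 0 < r := by rw [hr]; positivity
  have hB0 : 0 < ε ^ θ * Real.exp (-L) := by positivity
  have hrθ : r * θ = s * p := by rw [hr]; field_simp
  have hLr1 : L ^ (-r) ≤ 1 := rpow_le_one_of_one_le_of_nonpos hL1 (by linarith)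
  by_cases hcase : ε ≤ L ^ (-r)
  · -- small ε
    have hεθ : ε ^ θ ≤ (L ^ (-r)) ^ θ := rpow_le_rpow hε0.le hcase hθ.le
    have hB1 : ε ^ θ * Real.exp (-L) ≤ 1 := by
      have h1 : ε ^ θ ≤ 1 := rpow_le_one hε0.le (hcase.trans hLr1) hθ.le
      have h2 : Real.exp (-L) ≤ 1 := Real.exp_le_one_iff.2 (by linarith)
      nlinarith [Real.exp_pos (-L), rpow_pos_of_pos hε0 θ]
    calc (ε ^ θ * Real.exp (-L)) ^ (1 / (p - ε))
        ≤ (ε ^ θ * Real.exp (-L)) ^ (1 / p) :=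
          rpow_le_rpow_of_exponent_ge hB0 hB1
            (one_div_le_one_div_of_le hpε (by linarith))
      _ ≤ ((L ^ (-r)) ^ θ * Real.exp (-L)) ^ (1 / p) := by
          apply rpow_le_rpow hB0.le _ (by positivity)
          exact mul_le_mul_of_nonneg_right hεθ (Real.exp_pos _).le
      _ = L ^ (-s) * Real.exp (-L / p) := by
          rw [Real.mul_rpow (by positivity) (Real.exp_pos _).le,
            aux_rpow_rpow _ _ _ hLpos.le, aux_rpow_rpow _ _ _ hLpos.le, ← Real.exp_mul]
          congr 1
          · congr 1
            field_simp
            nlinarith [hrθ]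
          · congr 1
            ring
  · -- large ε
    have hcase' : L ^ (-r) < ε := not_le.1 hcase
    have hεp : ε < p := by linarith
    have hBp : ε ^ θ * Real.exp (-L) ≤ p ^ θ * Real.exp (-L) :=
      mul_le_mul_of_nonneg_right (rpow_le_rpow hε0.le hεp.le hθ.le) (Real.exp_pos _).le
    have hp1 : p ^ θ * Real.exp (-L) ≤ 1 := by
      rw [Real.rpow_def_of_pos hp0, ← Real.exp_add]
      exact Real.exp_le_one_iff.2 (by nlinarith)
    have hB1 : ε ^ θ * Real.exp (-L) ≤ 1 := hBp.trans hp1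
    set E := 1 / p + L ^ (-r) / p ^ 2 with hE
    have hLrpos : 0 < L ^ (-r) := rpow_pos_of_pos hLpos _
    have hEpos : 0 < E := by rw [hE]; positivity
    have hEle : E ≤ 1 / (p - ε) := by
      have h1 : 1 / (p - ε) - 1 / p = ε / (p * (p - ε)) := by
        rw [div_sub_div _ _ (ne_of_gt hpε) (ne_of_gt hp0)]
        congr 1
        · ring
        · ring
      have h2 : L ^ (-r) / p ^ 2 ≤ ε / (p * (p - ε)) := by
        apply div_le_div₀ hε0.le hcase'.le (by positivity)
        nlinarith
      rw [hE]; linarith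
    have hLL : L * L ^ (-r) = L ^ (1 - r) := by
      nth_rewrite 1 [← Real.rpow_one L]
      rw [← Real.rpow_add hLpos]
      ring_nf
    calc (ε ^ θ * Real.exp (-L)) ^ (1 / (p - ε))
        ≤ (ε ^ θ * Real.exp (-L)) ^ E := rpow_le_rpow_of_exponent_ge hB0 hB1 hEle
      _ ≤ (p ^ θ * Real.exp (-L)) ^ E := rpow_le_rpow hB0.le hBp hEpos.le
      _ = p ^ (θ * E) * (Real.exp (-(L ^ (1 - r)) / p ^ 2) * Real.exp (-L / p)) := by
          rw [Real.mul_rpow (by positivity) (Real.exp_pos _).le,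
            aux_rpow_rpow _ _ _ hp0.le, ← Real.exp_mul, ← Real.exp_add]
          congr 1
          rw [hE, ← hLL]
          field_simp
          ring
      _ ≤ p ^ (2 * θ / p) * (Real.exp (-(L ^ (1 - r)) / p ^ 2) * Real.exp (-L / p)) := by
          apply mul_le_mul_of_nonneg_right _ (by positivity)
          apply rpow_le_rpow_of_exponent_le hp.le
          have h9 : L ^ (-r) / p ^ 2 ≤ 1 / p := by
            rw [div_le_div_iff₀ (by positivity) hp0]
            nlinarith
          calc θ * E = θ * (1 / p + L ^ (-r) / p ^ 2) := by rw [hE]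
            _ ≤ θ * (1 / p + 1 / p) := by nlinarith
            _ = 2 * θ / p := by ring
      _ ≤ L ^ (-s) * Real.exp (-L / p) := by
          rw [← mul_assoc]
          exact mul_le_mul_of_nonneg_right hbig (Real.exp_pos _).le

lemma aux_real_lower (α p q θ₂ t L : ℝ) (hp0 : 0 < p) (hq1 : 1 < q) (hθ₂ : 0 < θ₂)
    (ht : 0 < t) (hαq : α + 1 / q = 1 / p) (hL1 : 1 ≤ L) (hLq : 1 / L < q - 1)
    (hLt : θ₂ / (q - 1 / L) ≤ t) :
    Real.exp (-1) * L ^ (-t) * Real.exp (-L / p) ≤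
      ((1 / L) ^ θ₂ * ((Real.exp (-L) ^ α) ^ (q - 1 / L) * Real.exp (-L))) ^ (1 / (q - 1 / L)) := by
  have hLpos : (0:ℝ) < L := by linarith
  have hq0 : (0:ℝ) < q := by linarith
  set m := q - 1 / L with hm
  have hm1 : 1 < m := by rw [hm]; linarith
  have hmpos : 0 < m := by linarith
  have key : ((1 / L) ^ θ₂ * ((Real.exp (-L) ^ α) ^ m * Real.exp (-L))) ^ (1 / m)
      = L ^ (-(θ₂ / m)) * (Real.exp (-(1 / (q * m))) * Real.exp (-L / p)) := by
    rw [aux_rpow_rpow _ _ _ (Real.exp_pos _).le, ← Real.exp_mul, ← Real.exp_add,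
      one_div L, ← Real.rpow_neg_one L, aux_rpow_rpow _ _ _ hLpos.le,
      Real.mul_rpow (by positivity) (Real.exp_pos _).le,
      aux_rpow_rpow _ _ _ hLpos.le, ← Real.exp_mul, ← Real.exp_add]
    congr 1
    · congr 1
      ring
    · congr 1
      have hα : α = 1 / p - 1 / q := by linarith
      have hLm : L * m = L * q - 1 := by rw [hm]; field_simp
      have hp' : p ≠ 0 := ne_of_gt hp0
      have hq' : q ≠ 0 := ne_of_gt hq0
      have hm' : m ≠ 0 := ne_of_gt hmpos
      have hL' : L ≠ 0 := ne_of_gt hLpos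
      clear_value m
      rw [hα]
      field_simp
      linear_combination p * hLm
  rw [key]
  have h1 : L ^ (-t) ≤ L ^ (-(θ₂ / m)) :=
    Real.rpow_le_rpow_of_exponent_le hL1 (by linarith)
  have h2 : Real.exp (-1) ≤ Real.exp (-(1 / (q * m))) := by
    apply Real.exp_le_exp.2
    have hqm : 1 ≤ q * m := by nlinarith
    have : 1 / (q * m) ≤ 1 := by
      rw [div_le_one (by positivity)]; exact hqm
    linarith
  calc Real.exp (-1) * L ^ (-t) * Real.exp (-L / p)
      = L ^ (-t) * (Real.exp (-1) * Real.exp (-L / p)) := by ring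
    _ ≤ L ^ (-(θ₂ / m)) * (Real.exp (-(1 / (q * m))) * Real.exp (-L / p)) := by
        apply mul_le_mul h1 (mul_le_mul_of_nonneg_right h2 (Real.exp_pos _).le)
          (by positivity) (by positivity)

lemma aux_upper_norm (p θ s r L : ℝ) (hp : 1 < p) (hθ : 0 < θ) (hs : 0 < s)
    (hr : r = s * p / θ) (hL1 : 1 ≤ L) (hLp : θ * Real.log p ≤ L)
    (hbig : p ^ (2 * θ / p) * Real.exp (-(L ^ (1 - r)) / p ^ 2) ≤ L ^ (-s)) :
    grandNorm p θ ((Set.Icc (0:ℝ) (Real.exp (-L))).indicator 1)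
      ≤ ENNReal.ofReal (L ^ (-s) * Real.exp (-L / p)) := by
  have hLpos : (0:ℝ) < L := lt_of_lt_of_le one_pos hL1
  rw [grandNorm, grandNormE]
  apply iSup₂_le
  intro ε hε
  obtain ⟨hε0, hε1⟩ := hε
  have hpε : 0 < p - ε := by linarith
  have hδ1 : Real.exp (-L) ≤ 1 := Real.exp_le_one_iff.2 (by linarith)
  have hint : (∫⁻ t in Set.Icc (0:ℝ) 1,
      ENNReal.ofReal |((Set.Icc (0:ℝ) (Real.exp (-L))).indicator 1) t| ^ (p - ε))
      = ENNReal.ofReal (Real.exp (-L)) := by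
    rw [lintegral_congr (fun t => aux_ind_rpow (Real.exp (-L)) t _ hpε),
      aux_lint_ind_c _ hδ1, one_mul]
  rw [hint, ← ENNReal.ofReal_mul (by positivity),
    ENNReal.ofReal_rpow_of_pos (by positivity)]
  exact ENNReal.ofReal_le_ofReal
    (aux_real_upper p θ s r L ε hp hθ hs hr hL1 hLp hbig ⟨hε0, hε1⟩)

lemma aux_riesz_lb (α δ : ℝ) (hα1 : α < 1) (hδ0 : 0 < δ) (hδ1 : δ ≤ 1) (x : ℝ)
    (hx : x ∈ Set.Icc (0:ℝ) δ) :
    ENNReal.ofReal (δ ^ α) ≤ rieszPotential α ((Set.Icc (0:ℝ) δ).indicator 1) x := by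
  rw [rieszPotential]
  have hpt : ∀ y : ℝ,
      (Set.Icc (0:ℝ) δ).indicator (fun _ => (1:ℝ≥0∞) / ENNReal.ofReal (δ ^ (1 - α))) y
        ≤ ENNReal.ofReal (((Set.Icc (0:ℝ) δ).indicator 1) y)
            / ENNReal.ofReal (|x - y| ^ (1 - α)) := by
    intro y
    by_cases hy : y ∈ Set.Icc (0:ℝ) δ
    · rw [Set.indicator_of_mem hy, Set.indicator_of_mem hy]
      have hxy : |x - y| ≤ δ := by
        rw [abs_le]
        constructor <;> [linarith [hx.1, hx.2, hy.1, hy.2]; linarith [hx.1, hx.2, hy.1, hy.2]]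
      have h2 : |x - y| ^ (1 - α) ≤ δ ^ (1 - α) :=
        Real.rpow_le_rpow (abs_nonneg _) hxy (by linarith)
      simp only [Pi.one_apply, ENNReal.ofReal_one]
      exact ENNReal.div_le_div le_rfl (ENNReal.ofReal_le_ofReal h2)
    · rw [Set.indicator_of_notMem hy]
      exact zero_le
  calc ENNReal.ofReal (δ ^ α)
      = ∫⁻ y in Set.Icc (0:ℝ) 1,
          (Set.Icc (0:ℝ) δ).indicator (fun _ => (1:ℝ≥0∞) / ENNReal.ofReal (δ ^ (1 - α))) y := by
        rw [aux_lint_ind_c _ hδ1]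
        rw [show δ ^ α = δ / δ ^ (1 - α) by
          rw [show α = 1 - (1 - α) by ring, Real.rpow_sub hδ0, Real.rpow_one]
          ring_nf]
        rw [ENNReal.ofReal_div_of_pos (Real.rpow_pos_of_pos hδ0 _), one_div,
          div_eq_mul_inv, mul_comm]
    _ ≤ _ := lintegral_mono hpt

end Aux

set_option maxHeartbeats 1000000 in
open Real Filter in
/-- **Theorem 2.1.** For `0<α<1`, `1<p<1/α`, `q=p/(1-αp)` and `θ₂ < θ₁(1+αq)`, the Riesz
potential operator `I_α` is not bounded from `L^{p),θ₁}([0,1])` to `L^{q),θ₂}([0,1])`;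
in fact for every `c>0` some characteristic function of a subinterval violates the bound. -/
theorem riesz_not_bounded_grand (α p q θ₁ θ₂ : ℝ)
    (hα0 : 0 < α) (hα1 : α < 1) (hp : 1 < p) (hpα : p < 1 / α)
    (hq : q = p / (1 - α * p)) (hθ₁ : 0 < θ₁) (hθ₂ : 0 < θ₂)
    (hθ : θ₂ < θ₁ * (1 + α * q)) :
    (¬ ∃ c : ℝ, 0 < c ∧ ∀ f : ℝ → ℝ, Measurable f → (∀ x, 0 ≤ f x) →
        grandNormE q θ₂ (rieszPotential α f) ≤ ENNReal.ofReal c * grandNorm p θ₁ f) ∧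
    (∀ c : ℝ, 0 < c → ∃ a b : ℝ, 0 ≤ a ∧ a < b ∧ b ≤ 1 ∧
        ENNReal.ofReal c * grandNorm p θ₁ ((Set.Icc a b).indicator 1) <
          grandNormE q θ₂ (rieszPotential α ((Set.Icc a b).indicator 1))) := by
  have hp0 : (0:ℝ) < p := by linarith
  have hαp : α * p < 1 := by rw [mul_comm]; exact (lt_div_iff₀ hα0).1 hpα
  have h1αp : 0 < 1 - α * p := by linarith
  have hq0 : (0:ℝ) < q := by rw [hq]; exact div_pos hp0 h1αp
  have hqp : p < q := by
    rw [hq, lt_div_iff₀ h1αp]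
    nlinarith [mul_pos (mul_pos hα0 hp0) hp0]
  have hq1 : 1 < q := by linarith
  have hαq : α + 1 / q = 1 / p := by
    rw [hq, one_div_div]
    field_simp
    ring
  have hip : θ₂ / q < θ₁ / p := by
    have h2 : 1 + α * q = q / p := by
      rw [hq]
      field_simp
      ring
    rw [h2] at hθ
    rw [div_lt_div_iff₀ hq0 hp0]
    have h3 := mul_lt_mul_of_pos_right hθ hp0
    have h4 : θ₁ * (q / p) * p = θ₁ * q := by field_simp
    linarith
  set s : ℝ := (θ₂ / q + θ₁ / p) / 2 with hs_def
  set t : ℝ := (θ₂ / q + s) / 2 with ht_def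
  set r : ℝ := s * p / θ₁ with hr_def
  have hθ₂q : 0 < θ₂ / q := by positivity
  have hs0 : 0 < s := by rw [hs_def]; linarith
  have hst : s < θ₁ / p := by rw [hs_def]; linarith
  have hq_s : θ₂ / q < s := by rw [hs_def]; linarith
  have hqt : θ₂ / q < t := by rw [ht_def]; linarith
  have ht0 : 0 < t := lt_trans hθ₂q hqt
  have hts : t < s := by rw [ht_def]; linarith
  have hr0 : 0 < r := by rw [hr_def]; positivity
  have hr1 : r < 1 := by
    rw [hr_def, div_lt_one hθ₁]
    exact (lt_div_iff₀ hp0).1 hst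
  have h1r : 0 < 1 - r := by linarith
  have htq : θ₂ / t < q := by
    rw [div_lt_iff₀ ht0]
    have h5 : θ₂ < t * q := (div_lt_iff₀ hq0).1 hqt
    nlinarith
  have htd : 0 < q - θ₂ / t := by linarith
  have key : ∀ c : ℝ, 0 < c → ∃ a b : ℝ, 0 ≤ a ∧ a < b ∧ b ≤ 1 ∧
      ENNReal.ofReal c * grandNorm p θ₁ ((Set.Icc a b).indicator 1) <
        grandNormE q θ₂ (rieszPotential α ((Set.Icc a b).indicator 1)) := by
    intro c hc
    have ev3 : ∀ᶠ L in atTop,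
        p ^ (2 * θ₁ / p) * Real.exp (-(L ^ (1 - r)) / p ^ 2) ≤ L ^ (-s) := by
      have hg : Tendsto (fun L : ℝ => L ^ (1 - r) / p ^ 2) atTop atTop :=
        (tendsto_rpow_atTop h1r).atTop_div_const (by positivity)
      have hcomp := ((tendsto_exp_div_rpow_atTop (s / (1 - r))).comp hg).eventually_ge_atTop
        (p ^ (2 * θ₁ / p) * (p ^ 2) ^ (s / (1 - r)))
      filter_upwards [hcomp, eventually_gt_atTop 0] with L hL hL0
      simp only [Function.comp] at hL
      have hy0 : 0 < L ^ (1 - r) / p ^ 2 := by positivity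
      have hx : (L ^ (1 - r) / p ^ 2) ^ (s / (1 - r))
          = L ^ s / (p ^ 2) ^ (s / (1 - r)) := by
        rw [Real.div_rpow (by positivity) (by positivity), aux_rpow_rpow _ _ _ hL0.le]
        congr 2
        field_simp
      have hyM : 0 < (L ^ (1 - r) / p ^ 2) ^ (s / (1 - r)) := Real.rpow_pos_of_pos hy0 _
      have h5 : p ^ (2 * θ₁ / p) * (p ^ 2) ^ (s / (1 - r))
          * (L ^ (1 - r) / p ^ 2) ^ (s / (1 - r)) ≤ Real.exp (L ^ (1 - r) / p ^ 2) :=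
        (le_div_iff₀ hyM).1 hL
      rw [hx] at h5
      have hppos : (0:ℝ) < (p ^ 2) ^ (s / (1 - r)) := by positivity
      have hE : p ^ (2 * θ₁ / p) * L ^ s ≤ Real.exp (L ^ (1 - r) / p ^ 2) := by
        have heq : p ^ (2 * θ₁ / p) * (p ^ 2) ^ (s / (1 - r))
            * (L ^ s / (p ^ 2) ^ (s / (1 - r))) = p ^ (2 * θ₁ / p) * L ^ s := by
          field_simp
        rw [heq] at h5
        exact h5
      have hLs : (0:ℝ) < L ^ s := Real.rpow_pos_of_pos hL0 s
      rw [show -(L ^ (1 - r)) / p ^ 2 = -(L ^ (1 - r) / p ^ 2) by ring, Real.exp_neg,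
        Real.rpow_neg hL0.le]
      rw [show p ^ (2 * θ₁ / p) * (Real.exp (L ^ (1 - r) / p ^ 2))⁻¹
          = (Real.exp (L ^ (1 - r) / p ^ 2) / p ^ (2 * θ₁ / p))⁻¹ by
        rw [inv_div]
        exact (div_eq_mul_inv _ _).symm]
      apply inv_anti₀ hLs
      rw [le_div_iff₀ (by positivity)]
      nlinarith [hE]
    obtain ⟨L, hL1, hLlog, hbig, hLq', hLtd, hLst⟩ :=
      ((eventually_ge_atTop (1:ℝ)).and ((eventually_ge_atTop (θ₁ * Real.log p)).and
        (ev3.and ((eventually_gt_atTop (1 / (q - 1))).and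
          ((eventually_ge_atTop (1 / (q - θ₂ / t))).and
            ((tendsto_rpow_atTop (show (0:ℝ) < s - t by linarith)).eventually_gt_atTop
              (c * Real.exp 1))))))).exists
    have hL0 : (0:ℝ) < L := lt_of_lt_of_le one_pos hL1
    have hδ0 : 0 < Real.exp (-L) := Real.exp_pos _
    have hδ1 : Real.exp (-L) ≤ 1 := Real.exp_le_one_iff.2 (by linarith)
    have hεq : 1 / L < q - 1 := by
      rw [div_lt_iff₀ hL0]
      have h6 := mul_lt_mul_of_pos_left hLq' (show (0:ℝ) < q - 1 by linarith)
      have h7 : (q - 1) * (1 / (q - 1)) = 1 :=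
        mul_one_div_cancel (by linarith : q - 1 ≠ 0)
      linarith
    have hε0' : 0 < 1 / L := by positivity
    have hqεpos : 0 < q - 1 / L := by linarith
    have hLt : θ₂ / (q - 1 / L) ≤ t := by
      have h7 : 1 / L ≤ q - θ₂ / t := by
        have h8 : 0 < 1 / (q - θ₂ / t) := by positivity
        calc 1 / L ≤ 1 / (1 / (q - θ₂ / t)) := one_div_le_one_div_of_le h8 hLtd
          _ = q - θ₂ / t := one_div_one_div _
      rw [div_le_iff₀ hqεpos]
      have h9 : t * (θ₂ / t) = θ₂ := by
        rw [mul_comm]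
        exact div_mul_cancel₀ _ (ne_of_gt ht0)
      nlinarith
    have HU := aux_upper_norm p θ₁ s r L hp hθ₁ hs0 hr_def hL1 hLlog hbig
    have HL : ENNReal.ofReal (Real.exp (-1) * L ^ (-t) * Real.exp (-L / p))
        ≤ grandNormE q θ₂ (rieszPotential α ((Set.Icc (0:ℝ) (Real.exp (-L))).indicator 1)) := by
      rw [grandNormE]
      apply le_iSup₂_of_le (1 / L) (⟨hε0', hεq⟩ : (1:ℝ) / L ∈ Set.Ioo 0 (q - 1))
      have hint2 : ENNReal.ofReal (Real.exp (-L) ^ α) ^ (q - 1 / L) * ENNReal.ofReal (Real.exp (-L))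
          ≤ ∫⁻ x in Set.Icc (0:ℝ) 1,
              rieszPotential α ((Set.Icc (0:ℝ) (Real.exp (-L))).indicator 1) x ^ (q - 1 / L) := by
        rw [← aux_lint_ind_c (Real.exp (-L)) hδ1
          (ENNReal.ofReal (Real.exp (-L) ^ α) ^ (q - 1 / L))]
        apply lintegral_mono
        intro x
        by_cases hx : x ∈ Set.Icc (0:ℝ) (Real.exp (-L))
        · rw [Set.indicator_of_mem hx]
          exact ENNReal.rpow_le_rpow (aux_riesz_lb α (Real.exp (-L)) hα1 hδ0 hδ1 x hx)
            (by linarith)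
        · rw [Set.indicator_of_notMem hx]
          exact zero_le
      calc ENNReal.ofReal (Real.exp (-1) * L ^ (-t) * Real.exp (-L / p))
          ≤ ENNReal.ofReal (((1 / L) ^ θ₂
              * ((Real.exp (-L) ^ α) ^ (q - 1 / L) * Real.exp (-L))) ^ (1 / (q - 1 / L))) :=
            ENNReal.ofReal_le_ofReal
              (aux_real_lower α p q θ₂ t L hp0 hq1 hθ₂ ht0 hαq hL1 hεq hLt)
        _ = (ENNReal.ofReal ((1 / L) ^ θ₂) * (ENNReal.ofReal (Real.exp (-L) ^ α) ^ (q - 1 / L)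
              * ENNReal.ofReal (Real.exp (-L)))) ^ (1 / (q - 1 / L)) := by
            rw [ENNReal.ofReal_rpow_of_pos (by positivity),
              ← ENNReal.ofReal_mul (by positivity), ← ENNReal.ofReal_mul (by positivity),
              ← ENNReal.ofReal_rpow_of_pos (by positivity)]
        _ ≤ (ENNReal.ofReal ((1 / L) ^ θ₂) * ∫⁻ x in Set.Icc (0:ℝ) 1,
              rieszPotential α ((Set.Icc (0:ℝ) (Real.exp (-L))).indicator 1) x
                ^ (q - 1 / L)) ^ (1 / (q - 1 / L)) := by
            apply ENNReal.rpow_le_rpow _ (by positivity)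
            exact mul_le_mul_right hint2 _
    have hvr : c * (L ^ (-s) * Real.exp (-L / p))
        < Real.exp (-1) * L ^ (-t) * Real.exp (-L / p) := by
      have h10 : c < Real.exp (-1) * L ^ (s - t) := by
        rw [Real.exp_neg, ← div_eq_inv_mul, lt_div_iff₀ (Real.exp_pos 1)]
        exact hLst
      have h11 : L ^ (-t) = L ^ (s - t) * L ^ (-s) := by
        rw [← Real.rpow_add hL0]; congr 1; ring
      have h12 : (0:ℝ) < L ^ (-s) := Real.rpow_pos_of_pos hL0 _
      have h13 : (0:ℝ) < Real.exp (-L / p) := Real.exp_pos _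
      rw [h11]
      nlinarith [mul_lt_mul_of_pos_right (mul_lt_mul_of_pos_right h10 h12) h13]
    refine ⟨0, Real.exp (-L), le_rfl, hδ0, hδ1, ?_⟩
    calc ENNReal.ofReal c * grandNorm p θ₁ ((Set.Icc (0:ℝ) (Real.exp (-L))).indicator 1)
        ≤ ENNReal.ofReal c * ENNReal.ofReal (L ^ (-s) * Real.exp (-L / p)) :=
          mul_le_mul_right HU _
      _ = ENNReal.ofReal (c * (L ^ (-s) * Real.exp (-L / p))) :=
          (ENNReal.ofReal_mul hc.le).symm
      _ < ENNReal.ofReal (Real.exp (-1) * L ^ (-t) * Real.exp (-L / p)) := by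
          rw [ENNReal.ofReal_lt_ofReal_iff (by positivity)]
          exact hvr
      _ ≤ _ := HL
  refine ⟨?_, key⟩
  rintro ⟨c, hc, hbound⟩
  obtain ⟨a, b, _, _, _, hlt⟩ := key c hc
  have hf : Measurable ((Set.Icc a b).indicator (1 : ℝ → ℝ)) :=
    measurable_one.indicator measurableSet_Icc
  have hnn : ∀ x, 0 ≤ ((Set.Icc a b).indicator (1 : ℝ → ℝ)) x :=
    fun x => Set.indicator_nonneg (fun _ _ => zero_le_one) x
  exact lt_irrefl _ (lt_of_lt_of_le hlt (hbound _ hf hnn))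
end

section
/- Let 0<α<1, 1<p<1/α, q=p/(1-αp), and let θ₁, θ₂ be positive numbers with θ₂ < θ₁(1+αq). Then the fractional maximal operator M_α is not bounded from L^{p),θ₁}([0,1]) to L^{q),θ₂}([0,1]): there is no constant c>0 such that ‖M_α f‖_{L^{q),θ₂}([0,1])} ≤ c‖f‖_{L^{p),θ₁}([0,1])} holds for all nonnegative measurable f on [0,1]; in fact, for every c>0 there exists a subinterval J ⊆ [0,1] such that ‖M_α χ_J‖_{L^{q),θ₂}([0,1])} > c‖χ_J‖_{L^{p),θ₁}([0,1])}. -/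
open MeasureTheory Set
open scoped ENNReal

/-- The fractional maximal operator
`(M_α f)(x) = sup { |J|^{α-1} ∫_J |f| : J ⊆ [0,1] an interval containing x }`. -/
noncomputable def fracMaximal (α : ℝ) (f : ℝ → ℝ) (x : ℝ) : ℝ≥0∞ :=
  ⨆ (a : ℝ) (b : ℝ) (_ : 0 ≤ a) (_ : a < b) (_ : b ≤ 1) (_ : x ∈ Set.Icc a b),
    ENNReal.ofReal ((b - a) ^ (α - 1)) * ∫⁻ y in Set.Icc a b, ENNReal.ofReal |f y|

section AuxProof
open Filter
lemma aux_ind_eq (σ r : ℝ) (hr : 0 < r) (t : ℝ) :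
    (ENNReal.ofReal |((Set.Icc (0:ℝ) σ).indicator 1 t)|) ^ r
      = (Set.Icc (0:ℝ) σ).indicator (fun _ => (1:ℝ≥0∞)) t := by
  by_cases ht : t ∈ Set.Icc (0:ℝ) σ <;>
    simp [Set.indicator_apply, ht, ENNReal.zero_rpow_of_pos hr]

lemma aux_lint_rpow (σ u r : ℝ) (hσu : σ ≤ u) (hr : 0 < r) :
    ∫⁻ t in Set.Icc (0:ℝ) u, (ENNReal.ofReal |((Set.Icc (0:ℝ) σ).indicator 1 t)|) ^ r
      = ENNReal.ofReal σ := by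
  rw [lintegral_congr (fun t => aux_ind_eq σ r hr t),
    lintegral_indicator measurableSet_Icc _]
  simp only [lintegral_const, Measure.restrict_apply MeasurableSet.univ,
    Set.univ_inter, one_mul]
  rw [Measure.restrict_apply measurableSet_Icc,
    Set.inter_eq_left.mpr (Set.Icc_subset_Icc_right hσu), Real.volume_Icc, sub_zero]

lemma aux_lint (σ u : ℝ) (hσu : σ ≤ u) :
    ∫⁻ t in Set.Icc (0:ℝ) u, ENNReal.ofReal |((Set.Icc (0:ℝ) σ).indicator 1 t)|
      = ENNReal.ofReal σ := by
  have := aux_lint_rpow σ u 1 hσu one_pos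
  simpa using this

lemma aux_tendsto (A B T Kc Kb : ℝ) (hAB : A < B) (hAT : A < T)
    (hKc : 0 < Kc) :
    Tendsto (fun L : ℝ => L ^ A * ((Kc * Real.log L / L) ^ B + Kb * L ^ (-T)))
      atTop (nhds 0) := by
  have h2 : Tendsto (fun L : ℝ => Kb * L ^ (A - T)) atTop (nhds 0) := by
    have := (tendsto_rpow_neg_atTop (show 0 < T - A by linarith)).const_mul Kb
    simpa [neg_sub] using this
  have h1 : Tendsto (fun L : ℝ => Kc ^ B * ((Real.log L) ^ B * L ^ (A - B)))
      atTop (nhds 0) := by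
    have hcomp := (tendsto_rpow_mul_exp_neg_mul_atTop_nhds_zero B (B - A)
      (by linarith)).comp Real.tendsto_log_atTop
    have h : Tendsto (fun L : ℝ => (Real.log L) ^ B * L ^ (A - B))
        atTop (nhds 0) := by
      apply hcomp.congr'
      filter_upwards [eventually_gt_atTop (0:ℝ)] with L hL
      simp only [Function.comp]
      rw [Real.rpow_def_of_pos hL]
      ring_nf
    simpa using h.const_mul (Kc ^ B)
  have hsum := h1.add h2
  rw [add_zero] at hsum
  apply hsum.congr'
  filter_upwards [eventually_ge_atTop (3:ℝ)] with L hL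
  have hL0 : 0 < L := by linarith
  have hlog : 0 < Real.log L := Real.log_pos (by linarith)
  have e1 : (Kc * Real.log L / L) ^ B = Kc ^ B * (Real.log L) ^ B / L ^ B := by
    rw [Real.div_rpow (by positivity) hL0.le, Real.mul_rpow hKc.le hlog.le]
  rw [e1, Real.rpow_sub hL0, Real.rpow_sub hL0, Real.rpow_neg hL0.le]
  have hB : (L:ℝ) ^ B ≠ 0 := by positivity
  have hT : (L:ℝ) ^ T ≠ 0 := by positivity
  field_simp

lemma aux_log_div (L : ℝ) (hL : 1 ≤ L) : Real.log L * (1 / L) ≤ 1 := by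
  have h0 : (0:ℝ) < L := by linarith
  have := Real.log_le_sub_one_of_pos h0
  rw [mul_one_div, div_le_one h0]
  linarith

set_option maxHeartbeats 1000000 in
theorem aux_main_part (α p q θ₁ θ₂ : ℝ)
    (hα0 : 0 < α) (hα1 : α < 1) (hp : 1 < p) (hpα : p < 1 / α)
    (hq : q = p / (1 - α * p)) (hθ₁ : 0 < θ₁) (hθ₂ : 0 < θ₂)
    (hθ : θ₂ < θ₁ * (1 + α * q)) :
    (∀ c : ℝ, 0 < c → ∃ a b : ℝ, 0 ≤ a ∧ a < b ∧ b ≤ 1 ∧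
        ENNReal.ofReal c * grandNorm p θ₁ ((Set.Icc a b).indicator 1) <
          grandNormE q θ₂ (fracMaximal α ((Set.Icc a b).indicator 1))) := by
  have hp0 : (0:ℝ) < p := by linarith
  have hαp : α * p < 1 := by
    have := (lt_div_iff₀ hα0).mp hpα; linarith [this]
  have h1αp : 0 < 1 - α * p := by linarith
  have hq0 : 0 < q := by rw [hq]; positivity
  have hq1 : 1 < q := by
    rw [hq, lt_div_iff₀ h1αp]; nlinarith
  have hqinv : 1 / p = α + 1 / q := by
    rw [hq, one_div_div]; field_simp; ring
  have hkey : θ₂ / q < θ₁ / p := by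
    have h1 : 1 + α * q = q / p := by rw [hq]; field_simp; ring
    rw [div_lt_div_iff₀ hq0 hp0]
    rw [h1] at hθ
    have h2 := mul_lt_mul_of_pos_right hθ hp0
    have h3 : θ₁ * (q / p) * p = θ₁ * q := by field_simp
    linarith
  intro c hc
  -- constants
  set Kb : ℝ := max 1 ((p - 1) ^ θ₁) with hKbdef
  have hKb1 : (1:ℝ) ≤ Kb := le_max_left _ _
  have hKb0 : (0:ℝ) < Kb := by linarith
  set Kc : ℝ := p ^ 2 * θ₁ with hKcdef
  have hKc0 : 0 < Kc := by positivity
  set K₂ : ℝ := 2 ^ (α - 1) * Real.exp (-1 - θ₂) with hK2def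
  have hK₂0 : 0 < K₂ := by positivity
  -- eventually facts
  have hld : Tendsto (fun L : ℝ => Real.log L / L) atTop (nhds 0) := by
    have hcomp := (tendsto_rpow_mul_exp_neg_mul_atTop_nhds_zero 1 1 one_pos).comp
      Real.tendsto_log_atTop
    apply hcomp.congr'
    filter_upwards [eventually_gt_atTop (0:ℝ)] with L hL
    simp only [Function.comp, Real.rpow_one, neg_one_mul, Real.exp_neg, Real.exp_log hL]
    rw [div_eq_mul_inv]
  have hev1 : ∀ᶠ L : ℝ in atTop, Kc * Real.log L / L ≤ 1 := by
    have hKld : Tendsto (fun L : ℝ => Kc * (Real.log L / L)) atTop (nhds 0) := by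
      simpa using hld.const_mul Kc
    have := hKld.eventually_lt_const one_pos
    filter_upwards [this] with L hL
    rw [mul_div_assoc]; exact hL.le
  have hev2 : ∀ᶠ L : ℝ in atTop,
      L ^ (θ₂ / q) * ((Kc * Real.log L / L) ^ (θ₁ / p) + Kb * L ^ (-θ₁)) < K₂ / c := by
    exact (aux_tendsto (θ₂/q) (θ₁/p) θ₁ Kc Kb hkey
      (lt_trans hkey (div_lt_self hθ₁ hp)) hKc0).eventually_lt_const (by positivity)
  have hev3 : ∀ᶠ L : ℝ in atTop, (1:ℝ)/L ≤ (q-1)/2 := by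
    filter_upwards [eventually_ge_atTop (max 1 (2/(q-1)))] with L hL
    have h1L : (1:ℝ) ≤ L := le_trans (le_max_left _ _) hL
    have h2L : 2/(q-1) ≤ L := le_trans (le_max_right _ _) hL
    have hq1' : (0:ℝ) < q - 1 := by linarith
    rw [div_le_div_iff₀ (by linarith) (by norm_num)]
    rw [div_le_iff₀ hq1'] at h2L
    nlinarith
  obtain ⟨L, h3L, hcond2, hcond3, hcond1⟩ :=
    ((eventually_ge_atTop (3:ℝ)).and (hev1.and (hev2.and hev3))).exists
  have hL0 : (0:ℝ) < L := by linarith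
  have hL1 : (1:ℝ) ≤ L := by linarith
  have hlogL : 0 < Real.log L := Real.log_pos (by linarith)
  set σ : ℝ := Real.exp (-L) with hσdef
  set ε : ℝ := 1 / L with hεdef
  set ε₀ : ℝ := Kc * Real.log L / L with hε₀def
  have hσ0 : 0 < σ := Real.exp_pos _
  have hσ1 : σ ≤ 1 := Real.exp_le_one_iff.mpr (by linarith)
  have h2σ1 : 2 * σ ≤ 1 := by
    have h1 : σ ≤ Real.exp (-1) := Real.exp_le_exp.mpr (by linarith)
    have h2 : (2:ℝ) ≤ Real.exp 1 := by have := Real.add_one_le_exp 1; linarith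
    have h3 : Real.exp (-1) ≤ 1/2 := by
      rw [Real.exp_neg]
      rw [inv_le_comm₀ (Real.exp_pos 1) (by norm_num)]
      simpa using h2
    linarith
  have hε0 : 0 < ε := by positivity
  have hε₀0 : 0 < ε₀ := by positivity
  have hlogσ : Real.log σ = -L := Real.log_exp _
  have hεq : ε ≤ (q-1)/2 := hcond1
  have hqε0 : (0:ℝ) < q - ε := by linarith
  have hqε1 : (1:ℝ) ≤ q - ε := by linarith
  have hεmem : ε ∈ Set.Ioo (0:ℝ) (q-1) := ⟨hε0, by linarith⟩
  -- real upper bound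
  have hrealU : ∀ ε' ∈ Set.Ioo (0:ℝ) (p-1),
      (ε' ^ θ₁ * σ) ^ (1/(p-ε')) ≤ σ ^ (1/p) * (ε₀ ^ (θ₁/p) + Kb * L ^ (-θ₁)) := by
    rintro ε' ⟨hε'0, hε'p⟩
    have hpε' : (1:ℝ) < p - ε' := by linarith
    have hpε'0 : (0:ℝ) < p - ε' := by linarith
    have hrest : 0 ≤ Kb * L ^ (-θ₁) := by positivity
    rcases le_or_gt ε' ε₀ with hle | hgt
    · have h1 : (ε' ^ θ₁ * σ) ^ (1/(p-ε')) ≤ (ε₀ ^ θ₁ * σ) ^ (1/(p-ε')) :=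
        Real.rpow_le_rpow (by positivity)
          (mul_le_mul_of_nonneg_right (Real.rpow_le_rpow hε'0.le hle hθ₁.le) hσ0.le)
          (by positivity)
      have hbase0 : 0 < ε₀ ^ θ₁ * σ := by positivity
      have hbase1 : ε₀ ^ θ₁ * σ ≤ 1 := by
        have hε₀1 : ε₀ ^ θ₁ ≤ 1 := Real.rpow_le_one hε₀0.le hcond2 hθ₁.le
        have := mul_le_mul hε₀1 hσ1 hσ0.le one_pos.le
        linarith
      have h2 : (ε₀ ^ θ₁ * σ) ^ (1/(p-ε')) ≤ (ε₀ ^ θ₁ * σ) ^ (1/p) :=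
        Real.rpow_le_rpow_of_exponent_ge hbase0 hbase1
          (one_div_le_one_div_of_le hpε'0 (by linarith))
      have h3 : (ε₀ ^ θ₁ * σ) ^ (1/p) = ε₀ ^ (θ₁/p) * σ ^ (1/p) := by
        rw [Real.mul_rpow (by positivity) hσ0.le, ← Real.rpow_mul hε₀0.le, mul_one_div]
      have h4 : ε₀ ^ (θ₁/p) * σ ^ (1/p) ≤ σ ^ (1/p) * (ε₀ ^ (θ₁/p) + Kb * L ^ (-θ₁)) := by
        rw [mul_comm]
        exact mul_le_mul_of_nonneg_left (le_add_of_nonneg_right hrest) (by positivity)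
      linarith [h3.le, h3.ge]
    · have h1 : (ε' ^ θ₁ * σ) ^ (1/(p-ε')) ≤ ((p-1) ^ θ₁ * σ) ^ (1/(p-ε')) :=
        Real.rpow_le_rpow (by positivity)
          (mul_le_mul_of_nonneg_right (Real.rpow_le_rpow hε'0.le hε'p.le hθ₁.le) hσ0.le)
          (by positivity)
      have hsplit : ((p-1) ^ θ₁ * σ) ^ (1/(p-ε'))
          = ((p-1)^θ₁) ^ (1/(p-ε')) * σ ^ (1/(p-ε')) :=
        Real.mul_rpow (Real.rpow_nonneg (by linarith) _) hσ0.le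
      have hKbb : ((p-1)^θ₁) ^ (1/(p-ε')) ≤ Kb := by
        rcases le_total ((p-1)^θ₁) 1 with h | h
        · exact le_trans (Real.rpow_le_one (Real.rpow_nonneg (by linarith) _) h
            (le_of_lt (one_div_pos.mpr hpε'0))) hKb1
        · refine le_trans ?_ (le_max_right 1 ((p-1)^θ₁))
          calc ((p-1)^θ₁) ^ (1/(p-ε')) ≤ ((p-1)^θ₁) ^ (1:ℝ) :=
                Real.rpow_le_rpow_of_exponent_le h (by rw [div_le_one hpε'0]; linarith)
            _ = (p-1)^θ₁ := Real.rpow_one _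
      have hσb : σ ^ (1/(p-ε')) ≤ σ ^ (1/p) * L ^ (-θ₁) := by
        have e1 : σ ^ (1/(p-ε')) = Real.exp (-L * (1/(p-ε'))) := by
          rw [Real.rpow_def_of_pos hσ0, hlogσ]
        have e2 : σ ^ (1/p) = Real.exp (-L * (1/p)) := by
          rw [Real.rpow_def_of_pos hσ0, hlogσ]
        have e3 : (L:ℝ) ^ (-θ₁) = Real.exp (Real.log L * (-θ₁)) :=
          Real.rpow_def_of_pos hL0 _
        rw [e1, e2, e3, ← Real.exp_add]
        apply Real.exp_le_exp.mpr
        have key1 : 1/p + ε'/p^2 ≤ 1/(p-ε') := by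
          rw [div_add_div _ _ (ne_of_gt hp0) (by positivity),
            div_le_div_iff₀ (by positivity) hpε'0]
          have hnn : 0 ≤ p * (ε' * ε') := by positivity
          linarith [hnn]
        have key2 : θ₁ * Real.log L ≤ L * (ε'/p^2) := by
          have hee : L * (ε₀/p^2) = θ₁ * Real.log L := by
            rw [hε₀def, hKcdef]
            field_simp
          rw [← hee]
          apply mul_le_mul_of_nonneg_left _ hL0.le
          gcongr
        have key3 : -L * (1/(p-ε')) ≤ -L * (1/p + ε'/p^2) := by
          have := mul_le_mul_of_nonpos_left key1 (by linarith : -L ≤ 0)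
          linarith
        have expand : -L*(1/p + ε'/p^2) = -L*(1/p) - L*(ε'/p^2) := by ring
        linarith
      calc (ε' ^ θ₁ * σ) ^ (1/(p-ε')) ≤ ((p-1) ^ θ₁ * σ) ^ (1/(p-ε')) := h1
        _ = ((p-1)^θ₁) ^ (1/(p-ε')) * σ ^ (1/(p-ε')) := hsplit
        _ ≤ Kb * (σ ^ (1/p) * L ^ (-θ₁)) :=
            mul_le_mul hKbb hσb (by positivity) hKb0.le
        _ = σ ^ (1/p) * (Kb * L ^ (-θ₁)) := by ring
        _ ≤ σ ^ (1/p) * (ε₀ ^ (θ₁/p) + Kb * L ^ (-θ₁)) :=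
            mul_le_mul_of_nonneg_left (le_add_of_nonneg_left (by positivity)) (by positivity)
  -- ENNReal upper bound
  have hupper : grandNorm p θ₁ ((Set.Icc (0:ℝ) σ).indicator 1)
      ≤ ENNReal.ofReal (σ ^ (1/p) * (ε₀ ^ (θ₁/p) + Kb * L ^ (-θ₁))) := by
    rw [grandNorm, grandNormE]
    apply iSup₂_le
    rintro ε' ⟨hε'0, hε'p⟩
    rw [aux_lint_rpow σ 1 (p-ε') hσ1 (by linarith : (0:ℝ) < p - ε'),
      ← ENNReal.ofReal_mul (by positivity), ENNReal.ofReal_rpow_of_pos (by positivity)]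
    exact ENNReal.ofReal_le_ofReal (hrealU ε' ⟨hε'0, hε'p⟩)
  -- lower bound
  set X : ℝ := (2*σ)^(α-1) * σ with hXdef
  have hX0 : 0 < X := by rw [hXdef]; positivity
  have hMlow : ∀ x ∈ Set.Icc σ (2*σ),
      ENNReal.ofReal X ≤ fracMaximal α ((Set.Icc (0:ℝ) σ).indicator 1) x := by
    rintro x ⟨hx1, hx2⟩
    have hx0 : 0 < x := lt_of_lt_of_le hσ0 hx1
    have hx3 : x ≤ 1 := by linarith
    rw [fracMaximal]
    refine le_iSup_of_le 0 (le_iSup_of_le x (le_iSup_of_le le_rfl (le_iSup_of_le hx0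
      (le_iSup_of_le hx3 (le_iSup_of_le ⟨hx0.le, le_rfl⟩ ?_)))))
    rw [sub_zero, aux_lint σ x (by linarith), ← ENNReal.ofReal_mul (by positivity), hXdef]
    apply ENNReal.ofReal_le_ofReal
    exact mul_le_mul_of_nonneg_right
      (Real.rpow_le_rpow_of_nonpos hx0 hx2 (by linarith)) hσ0.le
  have hIlow : ENNReal.ofReal (X ^ (q-ε)) * ENNReal.ofReal σ
      ≤ ∫⁻ t in Set.Icc (0:ℝ) 1,
          (fracMaximal α ((Set.Icc (0:ℝ) σ).indicator 1) t) ^ (q-ε) := by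
    have h1 : ENNReal.ofReal (X^(q-ε)) * ENNReal.ofReal σ
        = ∫⁻ _ in Set.Icc σ (2*σ), ENNReal.ofReal (X^(q-ε)) := by
      rw [setLIntegral_const, Real.volume_Icc, show 2*σ - σ = σ from by ring]
    rw [h1]
    refine le_trans (setLIntegral_mono' measurableSet_Icc fun x hx => ?_)
      (lintegral_mono_set (Set.Icc_subset_Icc hσ0.le h2σ1))
    rw [← ENNReal.ofReal_rpow_of_pos hX0]
    exact ENNReal.rpow_le_rpow (hMlow x hx) hqε0.le
  have hlower : ENNReal.ofReal ((ε ^ θ₂ * X ^ (q-ε) * σ) ^ (1/(q-ε)))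
      ≤ grandNormE q θ₂ (fracMaximal α ((Set.Icc (0:ℝ) σ).indicator 1)) := by
    rw [grandNormE]
    apply le_iSup₂_of_le ε hεmem
    have hstep : ENNReal.ofReal (ε ^ θ₂ * X ^ (q-ε) * σ)
        ≤ ENNReal.ofReal (ε ^ θ₂) * ∫⁻ t in Set.Icc (0:ℝ) 1,
            (fracMaximal α ((Set.Icc (0:ℝ) σ).indicator 1) t) ^ (q-ε) := by
      rw [mul_assoc, ENNReal.ofReal_mul (by positivity),
        ENNReal.ofReal_mul (by positivity)]
      exact mul_le_mul_right hIlow _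
    calc ENNReal.ofReal ((ε ^ θ₂ * X ^ (q-ε) * σ) ^ (1/(q-ε)))
        = (ENNReal.ofReal (ε ^ θ₂ * X ^ (q-ε) * σ)) ^ (1/(q-ε)) :=
          (ENNReal.ofReal_rpow_of_pos (by positivity)).symm
      _ ≤ _ := ENNReal.rpow_le_rpow hstep (le_of_lt (one_div_pos.mpr hqε0))
  -- B in product form
  have hBeq : (ε ^ θ₂ * X ^ (q-ε) * σ) ^ (1/(q-ε))
      = 2 ^ (α-1) * (ε ^ (θ₂/(q-ε)) * σ ^ (α + 1/(q-ε))) := by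
    have e0 : (ε ^ θ₂ * X ^ (q-ε) * σ) ^ (1/(q-ε))
        = (ε^θ₂)^(1/(q-ε)) * (X^(q-ε))^(1/(q-ε)) * σ^(1/(q-ε)) := by
      rw [Real.mul_rpow (by positivity) hσ0.le, Real.mul_rpow (by positivity) (by positivity)]
    have e1 : (ε^θ₂)^(1/(q-ε)) = ε^(θ₂/(q-ε)) := by
      rw [← Real.rpow_mul hε0.le, mul_one_div]
    have e2 : (X^(q-ε))^(1/(q-ε)) = X := by
      rw [← Real.rpow_mul hX0.le, mul_one_div, div_self hqε0.ne', Real.rpow_one]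
    have e3 : σ^(α + 1/(q-ε)) = σ^(α-1) * σ * σ^(1/(q-ε)) := by
      rw [show α + 1/(q-ε) = α-1 + 1 + 1/(q-ε) from by ring, Real.rpow_add hσ0,
        Real.rpow_add hσ0, Real.rpow_one]
    have e4 : X = 2^(α-1) * σ^(α-1) * σ := by
      rw [hXdef, Real.mul_rpow (by norm_num) hσ0.le]
    rw [e0, e1, e2, e3, e4]
    ring
  have hi : 1/(q-ε) - 1/q ≤ ε := by
    have h1 : 1/(q-ε) - 1/q = ε/((q-ε)*q) := by
      field_simp
      ring
    have h2 : (1:ℝ)*1 ≤ (q-ε)*q := mul_le_mul hqε1 (by linarith) (by linarith) (by linarith)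
    rw [h1, div_le_iff₀ (mul_pos hqε0 hq0)]
    have h3 := mul_le_mul_of_nonneg_left h2 hε0.le
    linarith
  have hεL : ε * L = 1 := by rw [hεdef]; field_simp
  have hlogε : Real.log ε = -Real.log L := by rw [hεdef, one_div, Real.log_inv]
  have hi1 : Real.exp (-θ₂) * L ^ (-(θ₂/q)) ≤ ε ^ (θ₂/(q-ε)) := by
    have e5 : ε ^ (θ₂/(q-ε)) = Real.exp ((-Real.log L) * (θ₂/(q-ε))) := by
      rw [Real.rpow_def_of_pos hε0, hlogε]
    have e6 : (L:ℝ) ^ (-(θ₂/q)) = Real.exp (Real.log L * (-(θ₂/q))) :=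
      Real.rpow_def_of_pos hL0 _
    rw [e5, e6, ← Real.exp_add]
    apply Real.exp_le_exp.mpr
    have h7 : Real.log L * (θ₂/(q-ε)) - Real.log L * (θ₂/q) ≤ θ₂ := by
      have h8 : Real.log L * (θ₂/(q-ε)) - Real.log L * (θ₂/q)
          = Real.log L * (θ₂ * (1/(q-ε) - 1/q)) := by ring
      rw [h8]
      calc Real.log L * (θ₂ * (1/(q-ε)-1/q)) ≤ Real.log L * (θ₂ * ε) := by
            apply mul_le_mul_of_nonneg_left _ hlogL.le
            exact mul_le_mul_of_nonneg_left hi hθ₂.le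
        _ = θ₂ * (Real.log L * ε) := by ring
        _ ≤ θ₂ * 1 := by
            apply mul_le_mul_of_nonneg_left _ hθ₂.le
            rw [hεdef]
            exact aux_log_div L hL1
        _ = θ₂ := mul_one _
    linarith
  have hi2 : Real.exp (-1) * σ ^ (1/p) ≤ σ ^ (α + 1/(q-ε)) := by
    have e7 : σ ^ (α + 1/(q-ε)) = Real.exp (-L * (α + 1/(q-ε))) := by
      rw [Real.rpow_def_of_pos hσ0, hlogσ]
    have e8 : σ ^ (1/p) = Real.exp (-L * (1/p)) := by
      rw [Real.rpow_def_of_pos hσ0, hlogσ]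
    rw [e7, e8, ← Real.exp_add]
    apply Real.exp_le_exp.mpr
    have h9 : L * (1/(q-ε) - 1/q) ≤ 1 := by
      calc L * (1/(q-ε)-1/q) ≤ L * ε := mul_le_mul_of_nonneg_left hi hL0.le
        _ = 1 := by rw [mul_comm]; exact hεL
    have h10 : L * (α + 1/(q-ε)) ≤ 1 + L * (1/p) := by
      rw [hqinv]
      have hexp : L*(α + 1/(q-ε)) - L*(α+1/q) = L*(1/(q-ε)-1/q) := by ring
      linarith
    linarith
  have hBpos : 0 < (ε ^ θ₂ * X ^ (q-ε) * σ) ^ (1/(q-ε)) :=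
    Real.rpow_pos_of_pos (by positivity) _
  have hBlb : K₂ * (σ^(1/p) * L^(-(θ₂/q))) ≤ (ε ^ θ₂ * X ^ (q-ε) * σ) ^ (1/(q-ε)) := by
    rw [hBeq]
    have hmm := mul_le_mul hi1 hi2 (by positivity) (by positivity)
    calc K₂ * (σ^(1/p) * L^(-(θ₂/q)))
        = 2^(α-1) * ((Real.exp (-θ₂) * L^(-(θ₂/q))) * (Real.exp (-1) * σ^(1/p))) := by
          rw [hK2def, show (-1:ℝ) - θ₂ = -θ₂ + -1 from by ring, Real.exp_add]
          ring
      _ ≤ 2^(α-1) * (ε^(θ₂/(q-ε)) * σ^(α+1/(q-ε))) := by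
          exact mul_le_mul_of_nonneg_left hmm (by positivity)
  have hfin : c * (σ^(1/p) * (ε₀^(θ₁/p) + Kb * L^(-θ₁)))
      < (ε ^ θ₂ * X ^ (q-ε) * σ) ^ (1/(q-ε)) := by
    have hLq0 : (0:ℝ) < L^(θ₂/q) := by positivity
    have hLqne : (L:ℝ)^(θ₂/q) ≠ 0 := hLq0.ne'
    have hG' : c * (L^(θ₂/q) * (ε₀^(θ₁/p) + Kb*L^(-θ₁))) < K₂ := by
      have h11 := mul_lt_mul_of_pos_left hcond3 hc
      have h12 : c * (K₂/c) = K₂ := by field_simp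
      rw [h12] at h11
      exact h11
    calc c * (σ^(1/p) * (ε₀^(θ₁/p) + Kb*L^(-θ₁)))
        = (σ^(1/p) * L^(-(θ₂/q))) * (c * (L^(θ₂/q) * (ε₀^(θ₁/p)+Kb*L^(-θ₁)))) := by
          have e9 : (σ^(1/p) * (L^(θ₂/q))⁻¹) * (c * (L^(θ₂/q) * (ε₀^(θ₁/p)+Kb*L^(-θ₁))))
              = c * (σ^(1/p) * (ε₀^(θ₁/p)+Kb*L^(-θ₁))) * ((L^(θ₂/q))⁻¹ * L^(θ₂/q)) := by
            ring
          rw [Real.rpow_neg hL0.le (θ₂/q), e9, inv_mul_cancel₀ hLqne, mul_one]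
      _ < (σ^(1/p) * L^(-(θ₂/q))) * K₂ := by
          apply mul_lt_mul_of_pos_left hG' (by positivity)
      _ = K₂ * (σ^(1/p) * L^(-(θ₂/q))) := by ring
      _ ≤ _ := hBlb
  refine ⟨0, σ, le_rfl, hσ0, hσ1, ?_⟩
  calc ENNReal.ofReal c * grandNorm p θ₁ ((Set.Icc (0:ℝ) σ).indicator 1)
      ≤ ENNReal.ofReal c * ENNReal.ofReal (σ^(1/p) * (ε₀^(θ₁/p)+Kb*L^(-θ₁))) :=
        mul_le_mul_right hupper _
    _ = ENNReal.ofReal (c * (σ^(1/p) * (ε₀^(θ₁/p)+Kb*L^(-θ₁)))) :=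
        (ENNReal.ofReal_mul hc.le).symm
    _ < ENNReal.ofReal ((ε ^ θ₂ * X ^ (q-ε) * σ) ^ (1/(q-ε))) :=
        (ENNReal.ofReal_lt_ofReal_iff hBpos).mpr hfin
    _ ≤ grandNormE q θ₂ (fracMaximal α ((Set.Icc (0:ℝ) σ).indicator 1)) := hlower


end AuxProof

/-- **Theorem 2.2.** For `0<α<1`, `1<p<1/α`, `q=p/(1-αp)` and `θ₂ < θ₁(1+αq)`, the fractional
maximal operator `M_α` is not bounded from `L^{p),θ₁}([0,1])` to `L^{q),θ₂}([0,1])`;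
in fact for every `c>0` some characteristic function of a subinterval violates the bound. -/
theorem fracMaximal_not_bounded_grand (α p q θ₁ θ₂ : ℝ)
    (hα0 : 0 < α) (hα1 : α < 1) (hp : 1 < p) (hpα : p < 1 / α)
    (hq : q = p / (1 - α * p)) (hθ₁ : 0 < θ₁) (hθ₂ : 0 < θ₂)
    (hθ : θ₂ < θ₁ * (1 + α * q)) :
    (¬ ∃ c : ℝ, 0 < c ∧ ∀ f : ℝ → ℝ, Measurable f → (∀ x, 0 ≤ f x) →
        grandNormE q θ₂ (fracMaximal α f) ≤ ENNReal.ofReal c * grandNorm p θ₁ f) ∧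
    (∀ c : ℝ, 0 < c → ∃ a b : ℝ, 0 ≤ a ∧ a < b ∧ b ≤ 1 ∧
        ENNReal.ofReal c * grandNorm p θ₁ ((Set.Icc a b).indicator 1) <
          grandNormE q θ₂ (fracMaximal α ((Set.Icc a b).indicator 1))) := by
  have main := aux_main_part α p q θ₁ θ₂ hα0 hα1 hp hpα hq hθ₁ hθ₂ hθ
  refine ⟨?_, main⟩
  rintro ⟨c, hc, hbound⟩
  obtain ⟨a, b, ha, hab, hb1, hlt⟩ := main c hc
  exact absurd (hbound _ (measurable_one.indicator measurableSet_Icc)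
    (fun x => Set.indicator_nonneg (fun _ _ => zero_le_one) x)) (not_le.mpr hlt)
end

section
/- Let 0<α<1, 1<p<1/α, q=p/(1-αp), and let w be a weight on [0,1]. Let φ(u) = [ (u−q)/(1−α(u−q)) + p ]^{1−(u−q)α}. Then the norms ‖·‖_{L^{q),φ}_w([0,1])} and ‖·‖_{L^{q),1+αq}_w([0,1])} are equivalent: there exist positive constants c₁, c₂ such that for every measurable f:[0,1]→ℝ, c₁‖f‖_{L^{q),1+αq}_w([0,1])} ≤ ‖f‖_{L^{q),φ}_w([0,1])} ≤ c₂‖f‖_{L^{q),1+αq}_w([0,1])}. -/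
open MeasureTheory Set
open scoped ENNReal

/-- Weighted grand Lebesgue norm on `[0,1]`:
`‖f‖_{L^{q),θ}_w} = sup_{0<ε<q-1} (ε^θ ∫₀¹ |f|^{q-ε} w)^{1/(q-ε)}`. -/
noncomputable def grandNormW (q θ : ℝ) (w f : ℝ → ℝ) : ℝ≥0∞ :=
  ⨆ ε ∈ Set.Ioo (0 : ℝ) (q - 1),
    (ENNReal.ofReal (ε ^ θ) *
      ∫⁻ t in Set.Icc (0 : ℝ) 1, ENNReal.ofReal (|f t| ^ (q - ε) * w t)) ^ (1 / (q - ε))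

/-- Weighted grand Lebesgue norm on `[0,1]` associated with a function `φ`:
`‖f‖_{L^{q),φ}_w} = sup_{0<ε<q-1} (φ(ε) ∫₀¹ |f|^{q-ε} w)^{1/(q-ε)}`. -/
noncomputable def grandNormPhiW (q : ℝ) (φ : ℝ → ℝ) (w f : ℝ → ℝ) : ℝ≥0∞ :=
  ⨆ ε ∈ Set.Ioo (0 : ℝ) (q - 1),
    (ENNReal.ofReal (φ ε) *
      ∫⁻ t in Set.Icc (0 : ℝ) 1, ENNReal.ofReal (|f t| ^ (q - ε) * w t)) ^ (1 / (q - ε))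

set_option maxHeartbeats 1200000 in
/-- **Lemma 3.2.** Let `0<α<1`, `1<p<1/α`, `q=p/(1-αp)`, and let `w` be a weight on `[0,1]`.
With `φ(u) = [ (u-q)/(1-α(u-q)) + p ]^{1-(u-q)α}`, the norms `‖·‖_{L^{q),φ}_w}` and
`‖·‖_{L^{q),1+αq}_w}` are equivalent. -/
theorem grandNormPhi_equiv_grandNorm (α p q : ℝ) (w : ℝ → ℝ)
    (hα0 : 0 < α) (hα1 : α < 1) (hp : 1 < p) (hpα : p < 1 / α)
    (hq : q = p / (1 - α * p))
    (hw_meas : Measurable w)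
    (hw_pos : ∀ᵐ x ∂(volume.restrict (Set.Icc (0 : ℝ) 1)), 0 < w x)
    (hw_int : IntegrableOn w (Set.Icc (0 : ℝ) 1)) :
    ∃ c₁ > (0 : ℝ), ∃ c₂ > (0 : ℝ), ∀ f : ℝ → ℝ,
      ENNReal.ofReal c₁ * grandNormW q (1 + α * q) w f ≤
        grandNormPhiW q (fun u => ((u - q) / (1 - α * (u - q)) + p) ^ (1 - (u - q) * α)) w f ∧
      grandNormPhiW q (fun u => ((u - q) / (1 - α * (u - q)) + p) ^ (1 - (u - q) * α)) w f ≤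
        ENNReal.ofReal c₂ * grandNormW q (1 + α * q) w f := by
  -- Basic positivity facts
  have hap : α * p < 1 := by
    have h := (lt_div_iff₀ hα0).mp hpα
    nlinarith
  have h1ap : 0 < 1 - α * p := by linarith
  have hp0 : 0 < p := by linarith
  have hq1 : 1 < q := by
    rw [hq, lt_div_iff₀ h1ap]
    nlinarith
  have hq0 : 0 < q := by linarith
  have hpq : q * (1 - α * p) = p := by
    rw [hq]; field_simp; exact div_self (by linarith)
  set θ : ℝ := 1 + α * q with hθ
  set φ : ℝ → ℝ := fun u => ((u - q) / (1 - α * (u - q)) + p) ^ (1 - (u - q) * α) with hφ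
  set Lm : ℝ := Real.log (1 + α * q) - Real.log (1 - α * p) with hLm
  have hLm0 : 0 ≤ Lm := by
    have h1 : Real.log (1 - α * p) ≤ Real.log (1 + α * q) := by
      gcongr <;> nlinarith
    simp only [hLm]; linarith
  set B : ℝ := (1 + α) * Lm + α * (1 + (q - 1) ^ 2) with hB
  -- Key pointwise comparison in ℝ
  have key : ∀ ε ∈ Set.Ioo (0 : ℝ) (q - 1),
      0 < φ ε ∧
      Real.exp (-B) * (ε ^ θ) ^ (1 / (q - ε)) ≤ φ ε ^ (1 / (q - ε)) ∧
      φ ε ^ (1 / (q - ε)) ≤ Real.exp B * (ε ^ θ) ^ (1 / (q - ε)) := by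
    rintro ε ⟨hε0, hεq⟩
    have hs1 : 1 < q - ε := by linarith
    have hs0 : (0 : ℝ) < q - ε := by linarith
    have hsq : q - ε < q := by linarith
    have hαs0 : (0 : ℝ) < 1 + α * (q - ε) := by nlinarith
    set K : ℝ := (1 - α * p) / (1 + α * (q - ε)) with hK
    have hK0 : 0 < K := div_pos h1ap hαs0
    have hden : 1 - α * (ε - q) = 1 + α * (q - ε) := by ring
    have hbase : (ε - q) / (1 - α * (ε - q)) + p = K * ε := by
      rw [hden, hK]
      field_simp
      nlinarith [hpq]
    have hφε : φ ε = (K * ε) ^ (1 + α * (q - ε)) := by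
      simp only [hφ]
      rw [hbase]
      congr 1
      ring
    have hKε : 0 < K * ε := mul_pos hK0 hε0
    have hφ0 : 0 < φ ε := by
      rw [hφε]; exact Real.rpow_pos_of_pos hKε _
    refine ⟨hφ0, ?_⟩
    -- express both sides as exponentials
    have e1 : φ ε ^ (1 / (q - ε)) =
        Real.exp (Real.log (K * ε) * ((1 + α * (q - ε)) * (1 / (q - ε)))) := by
      rw [hφε, ← Real.rpow_mul hKε.le, Real.rpow_def_of_pos hKε]
    have e2 : (ε ^ θ) ^ (1 / (q - ε)) =
        Real.exp (Real.log ε * (θ * (1 / (q - ε)))) := by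
      rw [← Real.rpow_mul hε0.le, Real.rpow_def_of_pos hε0]
    -- the difference of the exponents
    have hlogK : Real.log (K * ε) = Real.log K + Real.log ε :=
      Real.log_mul hK0.ne' hε0.ne'
    have hD : Real.log (K * ε) * ((1 + α * (q - ε)) * (1 / (q - ε))) -
        Real.log ε * (θ * (1 / (q - ε))) =
        Real.log K * ((1 + α * (q - ε)) / (q - ε)) -
          Real.log ε * (α * ε / (q - ε)) := by
      rw [hlogK, hθ]
      field_simp
      ring
    -- bound |log K| ≤ Lm
    have hK1 : K < 1 := by
      rw [hK, div_lt_one hαs0]; nlinarith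
    have hlogK0 : Real.log K ≤ 0 := Real.log_nonpos hK0.le hK1.le
    have hlogKval : Real.log K = Real.log (1 - α * p) - Real.log (1 + α * (q - ε)) :=
      Real.log_div h1ap.ne' hαs0.ne'
    have hlogKbound : -Real.log K ≤ Lm := by
      rw [hlogKval, hLm]
      have : Real.log (1 + α * (q - ε)) ≤ Real.log (1 + α * q) := by
        gcongr <;> nlinarith
      linarith
    -- bound the first term
    have hexp1 : 0 ≤ (1 + α * (q - ε)) / (q - ε) := by positivity
    have hexp1' : (1 + α * (q - ε)) / (q - ε) ≤ 1 + α := by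
      rw [div_le_iff₀ hs0]
      nlinarith [hs1, mul_pos hα0 hs0]
    have ht1 : |Real.log K * ((1 + α * (q - ε)) / (q - ε))| ≤ (1 + α) * Lm := by
      rw [abs_mul, abs_of_nonneg hexp1, abs_of_nonpos hlogK0]
      calc -Real.log K * ((1 + α * (q - ε)) / (q - ε)) ≤ Lm * (1 + α) := by
            apply mul_le_mul hlogKbound hexp1' hexp1 hLm0
        _ = (1 + α) * Lm := by ring
    -- bound the second term
    have hεlog : ε * |Real.log ε| ≤ 1 + (q - 1) ^ 2 := by
      rcases le_or_gt ε 1 with hle | hlt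
      · have h1 : Real.log ε ≤ 0 := Real.log_nonpos hε0.le hle
        have h2 : Real.log ε⁻¹ ≤ ε⁻¹ - 1 :=
          Real.log_le_sub_one_of_pos (by positivity)
        rw [Real.log_inv] at h2
        rw [abs_of_nonpos h1]
        have h3 : ε * -Real.log ε ≤ ε * (ε⁻¹ - 1) := by
          apply mul_le_mul_of_nonneg_left (by linarith) hε0.le
        have h4 : ε * (ε⁻¹ - 1) = 1 - ε := by
          field_simp
        nlinarith [sq_nonneg (q - 1)]
      · have h1 : 0 ≤ Real.log ε := Real.log_nonneg hlt.le
        rw [abs_of_nonneg h1]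
        have h2 : Real.log ε ≤ ε - 1 := Real.log_le_sub_one_of_pos hε0
        have h5 : ε ≤ q - 1 := hεq.le
        nlinarith
    have hfrac : α * ε / (q - ε) ≤ α * ε := by
      rw [div_le_iff₀ hs0]
      nlinarith [hs1, mul_pos hα0 hε0]
    have hfrac0 : 0 ≤ α * ε / (q - ε) := by positivity
    have ht2 : |Real.log ε * (α * ε / (q - ε))| ≤ α * (1 + (q - 1) ^ 2) := by
      rw [abs_mul, abs_of_nonneg hfrac0]
      calc |Real.log ε| * (α * ε / (q - ε)) ≤ |Real.log ε| * (α * ε) := by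
            apply mul_le_mul_of_nonneg_left hfrac (abs_nonneg _)
        _ = α * (ε * |Real.log ε|) := by ring
        _ ≤ α * (1 + (q - 1) ^ 2) := by
            apply mul_le_mul_of_nonneg_left hεlog hα0.le
    -- combine
    have habs : |Real.log (K * ε) * ((1 + α * (q - ε)) * (1 / (q - ε))) -
        Real.log ε * (θ * (1 / (q - ε)))| ≤ B := by
      rw [hD, hB]
      calc |Real.log K * ((1 + α * (q - ε)) / (q - ε)) -
            Real.log ε * (α * ε / (q - ε))|
          ≤ |Real.log K * ((1 + α * (q - ε)) / (q - ε))| +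
            |Real.log ε * (α * ε / (q - ε))| := abs_sub _ _
        _ ≤ (1 + α) * Lm + α * (1 + (q - 1) ^ 2) := add_le_add ht1 ht2
    obtain ⟨hd1, hd2⟩ := abs_le.mp habs
    constructor
    · rw [e1, e2, ← Real.exp_add, Real.exp_le_exp]
      linarith
    · rw [e1, e2, ← Real.exp_add, Real.exp_le_exp]
      linarith
  -- Now lift to ENNReal termwise
  refine ⟨Real.exp (-B), Real.exp_pos _, Real.exp B, Real.exp_pos _, fun f => ?_⟩
  have hmain : ∀ ε ∈ Set.Ioo (0 : ℝ) (q - 1),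
      ENNReal.ofReal (Real.exp (-B)) *
          (ENNReal.ofReal (ε ^ θ) *
            ∫⁻ t in Set.Icc (0 : ℝ) 1, ENNReal.ofReal (|f t| ^ (q - ε) * w t)) ^ (1 / (q - ε)) ≤
        (ENNReal.ofReal (φ ε) *
            ∫⁻ t in Set.Icc (0 : ℝ) 1, ENNReal.ofReal (|f t| ^ (q - ε) * w t)) ^ (1 / (q - ε)) ∧
      (ENNReal.ofReal (φ ε) *
            ∫⁻ t in Set.Icc (0 : ℝ) 1, ENNReal.ofReal (|f t| ^ (q - ε) * w t)) ^ (1 / (q - ε)) ≤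
        ENNReal.ofReal (Real.exp B) *
          (ENNReal.ofReal (ε ^ θ) *
            ∫⁻ t in Set.Icc (0 : ℝ) 1, ENNReal.ofReal (|f t| ^ (q - ε) * w t)) ^ (1 / (q - ε)) := by
    intro ε hε
    obtain ⟨hφ0, h1, h2⟩ := key ε hε
    have hs0 : (0 : ℝ) < q - ε := by
      have := hε.2; simp only [Set.mem_Ioo] at hε; linarith [hε.2, hq1]
    have hinv0 : (0 : ℝ) ≤ 1 / (q - ε) := by positivity
    have hεθ : 0 < ε ^ θ := Real.rpow_pos_of_pos hε.1 θ
    rw [ENNReal.mul_rpow_of_nonneg _ _ hinv0, ENNReal.mul_rpow_of_nonneg _ _ hinv0,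
      ENNReal.ofReal_rpow_of_pos hεθ, ENNReal.ofReal_rpow_of_pos hφ0]
    constructor
    · calc ENNReal.ofReal (Real.exp (-B)) *
            (ENNReal.ofReal ((ε ^ θ) ^ (1 / (q - ε))) *
              (∫⁻ t in Set.Icc (0 : ℝ) 1, ENNReal.ofReal (|f t| ^ (q - ε) * w t)) ^ (1 / (q - ε)))
          = ENNReal.ofReal (Real.exp (-B) * (ε ^ θ) ^ (1 / (q - ε))) *
              (∫⁻ t in Set.Icc (0 : ℝ) 1, ENNReal.ofReal (|f t| ^ (q - ε) * w t)) ^ (1 / (q - ε)) := by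
            rw [ENNReal.ofReal_mul (Real.exp_pos _).le, mul_assoc]
        _ ≤ ENNReal.ofReal (φ ε ^ (1 / (q - ε))) *
              (∫⁻ t in Set.Icc (0 : ℝ) 1, ENNReal.ofReal (|f t| ^ (q - ε) * w t)) ^ (1 / (q - ε)) :=
            mul_le_mul_left (ENNReal.ofReal_le_ofReal h1) _
    · calc ENNReal.ofReal (φ ε ^ (1 / (q - ε))) *
            (∫⁻ t in Set.Icc (0 : ℝ) 1, ENNReal.ofReal (|f t| ^ (q - ε) * w t)) ^ (1 / (q - ε))
          ≤ ENNReal.ofReal (Real.exp B * (ε ^ θ) ^ (1 / (q - ε))) *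
              (∫⁻ t in Set.Icc (0 : ℝ) 1, ENNReal.ofReal (|f t| ^ (q - ε) * w t)) ^ (1 / (q - ε)) :=
            mul_le_mul_left (ENNReal.ofReal_le_ofReal h2) _
        _ = ENNReal.ofReal (Real.exp B) *
              (ENNReal.ofReal ((ε ^ θ) ^ (1 / (q - ε))) *
                (∫⁻ t in Set.Icc (0 : ℝ) 1, ENNReal.ofReal (|f t| ^ (q - ε) * w t)) ^ (1 / (q - ε))) := by
            rw [ENNReal.ofReal_mul (Real.exp_pos _).le, mul_assoc]
  constructor
  · simp only [grandNormW, grandNormPhiW]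
    simp_rw [ENNReal.mul_iSup]
    refine iSup₂_le fun ε hε => ?_
    exact (hmain ε hε).1.trans
      (le_biSup (fun ε => (ENNReal.ofReal (φ ε) *
        ∫⁻ t in Set.Icc (0 : ℝ) 1, ENNReal.ofReal (|f t| ^ (q - ε) * w t)) ^ (1 / (q - ε))) hε)
  · simp only [grandNormW, grandNormPhiW]
    simp_rw [ENNReal.mul_iSup]
    refine iSup₂_le fun ε hε => ?_
    exact (hmain ε hε).2.trans
      (le_biSup (fun ε => ENNReal.ofReal (Real.exp B) * (ENNReal.ofReal (ε ^ θ) *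
        ∫⁻ t in Set.Icc (0 : ℝ) 1, ENNReal.ofReal (|f t| ^ (q - ε) * w t)) ^ (1 / (q - ε))) hε)
end

section
/- Let 0<α<1, 1<p<1/α, q=p/(1−αp), and let θ₁, θ₂ be positive numbers with θ₂ < θ₁ q/p (equivalently θ₂ < (1+αq)θ₁). Then the one-sided Riemann–Liouville operator R_α is not bounded from L^{p),θ₁}([0,1]) to L^{q),θ₂}([0,1]): there is no constant c>0 such that ‖R_α f‖_{L^{q),θ₂}([0,1])} ≤ c‖f‖_{L^{p),θ₁}([0,1])} holds for all nonnegative measurable f on [0,1]; in fact, for every c>0 there exists n ∈ ℕ such that ‖R_α χ_{(0,1/(2n))}‖_{L^{q),θ₂}([0,1])} > c‖χ_{(0,1/(2n))}‖_{L^{p),θ₁}([0,1])}. -/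
open MeasureTheory Set
open scoped ENNReal

/-- The one-sided (Riemann–Liouville) potential `(R_α f)(x) = ∫₀^x f(t)/(x-t)^{1-α} dt`
of a nonnegative function, with values in `ℝ≥0∞`. -/
noncomputable def riemannLiouville (α : ℝ) (f : ℝ → ℝ) (x : ℝ) : ℝ≥0∞ :=
  ∫⁻ t in Set.Ioo (0 : ℝ) x, ENNReal.ofReal (f t) / ENNReal.ofReal ((x - t) ^ (1 - α))

section Aux

open Real Filter

/-- Pointwise upper bound for the grand norm of a small indicator. -/
private lemma den_core {p θ₁ β γ L : ℝ} (hp : 1 < p) (hθ₁ : 0 < θ₁) (hβ : 0 < β)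
    (hγ1 : γ < 1) (hγ2 : β * p / θ₁ < γ)
    (hL1 : 1 ≤ L) (hL2 : p ^ 2 * (β * log L) ≤ L ^ (1 - γ)) :
    ∀ ε ∈ Ioo (0:ℝ) (p - 1),
      (ε ^ θ₁ * exp (-L)) ^ (1 / (p - ε)) ≤ p ^ θ₁ * exp (-(L / p)) * L ^ (-β) := by
  intro ε ⟨hε0, hε1⟩
  have hp0 : (0:ℝ) < p := lt_trans one_pos hp
  have hpe : (0:ℝ) < p - ε := by linarith
  have hL0 : (0:ℝ) < L := lt_of_lt_of_le one_pos hL1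
  have hlogL : 0 ≤ log L := log_nonneg hL1
  have hγ0 : 0 < γ := lt_trans (by positivity) hγ2
  have hγ2' : β * p < γ * θ₁ := by
    have := (div_lt_iff₀ hθ₁).mp hγ2
    linarith
  have hbase : (0:ℝ) < ε ^ θ₁ * exp (-L) := mul_pos (rpow_pos_of_pos hε0 _) (exp_pos _)
  have hLHS : (ε ^ θ₁ * exp (-L)) ^ (1 / (p - ε))
      = exp ((θ₁ * log ε - L) / (p - ε)) := by
    rw [rpow_def_of_pos hbase, log_mul (ne_of_gt (rpow_pos_of_pos hε0 _)) (ne_of_gt (exp_pos _)),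
      log_rpow hε0, log_exp]
    ring_nf
  have hRHS : p ^ θ₁ * exp (-(L / p)) * L ^ (-β)
      = exp (θ₁ * log p - L / p - β * log L) := by
    rw [rpow_def_of_pos hp0, rpow_def_of_pos hL0, ← exp_add, ← exp_add]
    ring_nf
  rw [hLHS, hRHS, exp_le_exp]
  have hkey : 0 ≤ θ₁ * log p := mul_nonneg hθ₁.le (log_nonneg hp.le)
  rw [sub_div]
  by_cases hcase : ε ≤ L ^ (-γ)
  · -- small ε
    have hε1' : ε ≤ 1 :=
      le_trans hcase (rpow_le_one_of_one_le_of_nonpos hL1 (by linarith))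
    have hlogε : log ε ≤ -γ * log L := by
      calc log ε ≤ log (L ^ (-γ)) := log_le_log hε0 hcase
        _ = -γ * log L := log_rpow hL0 _
    have hlogε0 : log ε ≤ 0 := log_nonpos hε0.le hε1'
    have ha : θ₁ * log ε / (p - ε) ≤ θ₁ * log ε / p := by
      rw [div_le_div_iff₀ hpe hp0]
      nlinarith [mul_nonneg (mul_nonneg hθ₁.le (neg_nonneg.2 hlogε0)) hε0.le]
    have hb : L / p ≤ L / (p - ε) := by
      apply div_le_div_of_nonneg_left hL0.le hpe
      linarith
    have hstep : θ₁ * log ε / p ≤ -(β * log L) := by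
      rw [div_le_iff₀ hp0]
      have h1 : θ₁ * log ε ≤ θ₁ * (-γ * log L) := mul_le_mul_of_nonneg_left hlogε hθ₁.le
      nlinarith [mul_nonneg hlogL (sub_nonneg.2 hγ2'.le)]
    linarith
  · -- large ε
    push_neg at hcase
    have hterm1 : θ₁ * log ε / (p - ε) ≤ θ₁ * log p := by
      by_cases h1 : ε ≤ 1
      · exact le_trans (div_nonpos_of_nonpos_of_nonneg
          (mul_nonpos_of_nonneg_of_nonpos hθ₁.le (log_nonpos hε0.le h1)) hpe.le) hkey
      · push_neg at h1
        have h2 : (1:ℝ) ≤ p - ε := by linarith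
        have h3 : 0 ≤ θ₁ * log ε := mul_nonneg hθ₁.le (log_nonneg h1.le)
        calc θ₁ * log ε / (p - ε) ≤ θ₁ * log ε := div_le_self h3 h2
          _ ≤ θ₁ * log p := mul_le_mul_of_nonneg_left (log_le_log hε0 (by linarith)) hθ₁.le
    have hterm2 : -(L / (p - ε)) ≤ -(L / p) - β * log L := by
      have e1 : L / (p - ε) - L / p = L * ε / (p * (p - ε)) := by
        field_simp
        ring
      have e2 : L ^ (1 - γ) ≤ L * ε := by
        have : L ^ (1 - γ) = L * L ^ (-γ) := by
          rw [show (1:ℝ) - γ = 1 + -γ by ring, rpow_add hL0, rpow_one]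
        rw [this]
        exact mul_le_mul_of_nonneg_left hcase.le hL0.le
      have e3 : β * log L ≤ L * ε / (p * (p - ε)) := by
        rw [le_div_iff₀ (by positivity)]
        nlinarith [mul_nonneg (mul_nonneg hβ.le hlogL) (mul_nonneg hε0.le hp0.le)]
      linarith
    linarith

/-- The core scalar inequality comparing the two grand norms at `ε = L⁻¹`. -/
private lemma num_core {α p q θ₁ θ₂ c β c₂ L : ℝ}
    (hαeq : α = 1/p - 1/q) (hp0 : 0 < p) (hq1 : 1 < q)
    (hc : 0 < c) (hβ0 : 0 < β) (hc₂ : 0 < c₂)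
    (hL1 : 1 ≤ L)
    (hsβ : L⁻¹ ≤ (q * β - θ₂) / (2 * β))
    (hlog : q * |Real.log c + θ₁ * Real.log p| + 1/q + |Real.log c₂|
      < ((q * β - θ₂) / 2) * Real.log L) :
    c * (p ^ θ₁ * exp (-(L / p)) * L ^ (-β))
      < ((L⁻¹) ^ θ₂ * (c₂ * exp (-((1 + α * (q - L⁻¹)) * L)))) ^ (1 / (q - L⁻¹)) := by
  have hL0 : (0:ℝ) < L := lt_of_lt_of_le one_pos hL1
  have hlogL : 0 ≤ log L := log_nonneg hL1
  have hLinv : L⁻¹ ≤ 1 := inv_le_one_of_one_le₀ hL1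
  have hinv0 : (0:ℝ) < L⁻¹ := by positivity
  have hq0 : (0:ℝ) < q := lt_trans one_pos hq1
  have hId0 : (1 + α * (q - L⁻¹)) * L - (q - L⁻¹) * (L / p) = 1 / q := by
    rw [hαeq]; field_simp; ring
  obtain ⟨s, hs_def⟩ : ∃ s, q - L⁻¹ = s := ⟨_, rfl⟩
  rw [hs_def] at hId0 ⊢
  have hs0 : 0 < s := by rw [← hs_def]; linarith
  have hsq : s ≤ q := by rw [← hs_def]; linarith
  have hsβ' : s * β - θ₂ ≥ (q * β - θ₂) / 2 := by
    have h3 : L⁻¹ * β ≤ (q * β - θ₂) / (2 * β) * β := mul_le_mul_of_nonneg_right hsβ hβ0.le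
    have h4 : (q * β - θ₂) / (2 * β) * β = (q * β - θ₂) / 2 := by field_simp
    have h6 : s * β = q * β - L⁻¹ * β := by rw [← hs_def]; ring
    rw [h4] at h3
    linarith
  have hLHS : c * (p ^ θ₁ * exp (-(L / p)) * L ^ (-β))
      = exp (log c + θ₁ * log p - L / p - β * log L) := by
    rw [rpow_def_of_pos hp0, rpow_def_of_pos hL0,
      show log c + θ₁ * log p - L / p - β * log L
        = log c + (log p * θ₁ + (-(L / p) + log L * (-β))) by ring,
      exp_add, exp_add, exp_add, exp_log hc]
    ring
  have hRHS : ((L⁻¹) ^ θ₂ * (c₂ * exp (-((1 + α * s) * L)))) ^ (1 / s)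
      = exp ((-(θ₂ * log L) + log c₂ - (1 + α * s) * L) / s) := by
    have hb : (0:ℝ) < (L⁻¹) ^ θ₂ * (c₂ * exp (-((1 + α * s) * L))) := by positivity
    rw [rpow_def_of_pos hb, log_mul (by positivity) (by positivity),
      log_mul (ne_of_gt hc₂) (ne_of_gt (exp_pos _)), log_rpow hinv0, log_exp, log_inv]
    ring_nf
  rw [hLHS, hRHS, exp_lt_exp, lt_div_iff₀ hs0]
  have h5 : ((q * β - θ₂) / 2) * log L ≤ s * β * log L - θ₂ * log L := by
    nlinarith [mul_nonneg (sub_nonneg.2 hsβ'.le) hlogL]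
  have h7 : s * (log c + θ₁ * log p) ≤ q * |log c + θ₁ * log p| := by
    calc s * (log c + θ₁ * log p) ≤ s * |log c + θ₁ * log p| :=
          mul_le_mul_of_nonneg_left (le_abs_self _) hs0.le
      _ ≤ q * |log c + θ₁ * log p| := mul_le_mul_of_nonneg_right hsq (abs_nonneg _)
  have h8 : -log c₂ ≤ |log c₂| := neg_le_abs _
  nlinarith [hId0, hlog, h5, h7, h8]

/-- Evaluation of the lintegral for the indicator. -/
private lemma lint_eval {δ p ε : ℝ} (hδ0 : 0 < δ) (hδ1 : δ ≤ 1) (hpe : 0 < p - ε) :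
    ∫⁻ t in Icc (0:ℝ) 1,
      (ENNReal.ofReal |((Ioo (0:ℝ) δ).indicator 1) t|) ^ (p - ε) = ENNReal.ofReal δ := by
  have hpt : ∀ t, (ENNReal.ofReal |((Ioo (0:ℝ) δ).indicator 1) t|) ^ (p - ε)
      = (Ioo (0:ℝ) δ).indicator (fun _ => (1:ℝ≥0∞)) t := by
    intro t
    by_cases ht : t ∈ Ioo (0:ℝ) δ
    · simp [Set.indicator_of_mem ht]
    · simp [Set.indicator_of_notMem ht, ENNReal.zero_rpow_of_pos hpe]
  simp_rw [hpt]
  have hsub : Ioo (0:ℝ) δ ⊆ Icc (0:ℝ) 1 := fun x hx => ⟨hx.1.le, hx.2.le.trans hδ1⟩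
  rw [lintegral_indicator measurableSet_Ioo, Measure.restrict_restrict measurableSet_Ioo,
    setLIntegral_one, Set.inter_eq_self_of_subset_left hsub, Real.volume_Ioo, sub_zero]

/-- Pointwise lower bound for the Riemann-Liouville potential of the indicator. -/
private lemma rl_lower {α δ : ℝ} (hα1 : α < 1) (hδ0 : 0 < δ) {x : ℝ}
    (hx : x ∈ Ioc δ 1) :
    ENNReal.ofReal (δ * x ^ (α - 1)) ≤ riemannLiouville α ((Ioo (0:ℝ) δ).indicator 1) x := by
  obtain ⟨hxδ, hx1⟩ := hx
  have hx0 : 0 < x := lt_trans hδ0 hxδ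
  calc ENNReal.ofReal (δ * x ^ (α - 1))
      = ∫⁻ t in Ioo (0:ℝ) δ, ENNReal.ofReal (x ^ (α - 1)) := by
        rw [setLIntegral_const, Real.volume_Ioo, sub_zero,
          ← ENNReal.ofReal_mul (rpow_nonneg hx0.le _), mul_comm]
    _ ≤ ∫⁻ t in Ioo (0:ℝ) δ,
          ENNReal.ofReal (((Ioo (0:ℝ) δ).indicator 1) t) /
            ENNReal.ofReal ((x - t) ^ (1 - α)) := by
        apply lintegral_mono_ae
        rw [ae_restrict_iff' measurableSet_Ioo]
        apply Filter.Eventually.of_forall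
        intro t ht
        rw [Set.indicator_of_mem ht, Pi.one_apply, ENNReal.ofReal_one]
        have h1 : (x - t) ^ (1 - α) ≤ x ^ (1 - α) :=
          rpow_le_rpow (by linarith [ht.2, hxδ]) (by linarith [ht.1]) (by linarith)
        have h2 : ENNReal.ofReal ((x - t) ^ (1 - α)) ≤ ENNReal.ofReal (x ^ (1 - α)) :=
          ENNReal.ofReal_le_ofReal h1
        have h3 : ENNReal.ofReal (x ^ (α - 1)) = (ENNReal.ofReal (x ^ (1 - α)))⁻¹ := by
          rw [show (α - 1) = -(1 - α) by ring, rpow_neg hx0.le,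
            ENNReal.ofReal_inv_of_pos (rpow_pos_of_pos hx0 _)]
        rw [h3, one_div]
        exact ENNReal.inv_le_inv' h2
    _ ≤ riemannLiouville α ((Ioo (0:ℝ) δ).indicator 1) x := by
        apply lintegral_mono_set
        exact Set.Ioo_subset_Ioo le_rfl hxδ.le

/-- Lower bound for the grand-norm integral of the potential. -/
private lemma num_lint {α q δ s : ℝ} (hα1 : α < 1) (hδ0 : 0 < δ) (hδ1 : δ ≤ 1)
    (hs0 : 0 < s) (hq0 : 0 < q) (hsq : s ≤ q) (hm' : 0 < (1-α)*s - 1)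
    (h2 : 2 ≤ δ ^ (1 - (1-α)*s)) :
    ENNReal.ofReal ((1/(2*((1-α)*q))) * δ^(1+α*s))
      ≤ ∫⁻ x in Icc (0:ℝ) 1, (riemannLiouville α ((Ioo (0:ℝ) δ).indicator 1) x) ^ s := by
  have h1α : (0:ℝ) < 1 - α := by linarith
  have hQ : (0:ℝ) < (1-α)*q := mul_pos h1α hq0
  have hcont : ContinuousOn (fun x : ℝ => (δ * x^(α-1))^s) (Icc δ 1) := by
    apply ContinuousOn.rpow_const
    · exact continuousOn_const.mul (continuousOn_id.rpow_const
        (fun x hx => Or.inl (ne_of_gt (lt_of_lt_of_le hδ0 hx.1))))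
    · exact fun x _ => Or.inr hs0.le
  have hint : IntegrableOn (fun x : ℝ => (δ * x^(α-1))^s) (Ioc δ 1) :=
    (hcont.integrableOn_Icc).mono_set Ioc_subset_Icc_self
  have hnn : 0 ≤ᵐ[volume.restrict (Ioc δ 1)] fun x : ℝ => (δ * x^(α-1))^s := by
    rw [Filter.EventuallyLE, ae_restrict_iff' measurableSet_Ioc]
    exact Filter.Eventually.of_forall fun x hx => rpow_nonneg
      (mul_nonneg hδ0.le (rpow_nonneg (le_of_lt (lt_trans hδ0 hx.1)) _)) _
  obtain ⟨r, hr⟩ : ∃ r, (α-1)*s = r := ⟨_, rfl⟩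
  have hr1 : r + 1 < 0 := by rw [← hr]; nlinarith
  have hJ : ∫ x in Ioc δ 1, (δ * x^(α-1))^s = δ^s * ((1 - δ^(r+1))/(r+1)) := by
    have e1 : ∫ x in Ioc δ 1, (δ * x^(α-1))^s = ∫ x in Ioc δ 1, δ^s * x^r := by
      apply setIntegral_congr_fun measurableSet_Ioc
      intro x hx
      have hx0 : (0:ℝ) < x := lt_trans hδ0 hx.1
      dsimp only
      rw [mul_rpow hδ0.le (rpow_nonneg hx0.le _), ← rpow_mul hx0.le, hr]
    rw [e1, MeasureTheory.integral_const_mul, ← intervalIntegral.integral_of_le hδ1,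
      integral_rpow (Or.inr ⟨by linarith, by
        rw [uIcc_of_le hδ1]; exact fun h => absurd h.1 (not_le.mpr hδ0)⟩),
      one_rpow]
  have hB0 : (0:ℝ) < δ^s := rpow_pos_of_pos hδ0 _
  have hA0 : (0:ℝ) < δ^(r+1) := rpow_pos_of_pos hδ0 _
  have hA2 : 2 ≤ δ^(r+1) := by
    have : 1 - (1-α)*s = r + 1 := by rw [← hr]; ring
    rwa [this] at h2
  have hM0 : (0:ℝ) < -(r+1) := by linarith
  have hMle : -(r+1) ≤ (1-α)*q := by
    have : -(r+1) = (1-α)*s - 1 := by rw [← hr]; ring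
    nlinarith
  have hBA : δ^s * δ^(r+1) = δ^(1+α*s) := by
    rw [← rpow_add hδ0]; congr 1; rw [← hr]; ring
  have step1 : δ^(r+1) / (2*((1-α)*q)) ≤ (1 - δ^(r+1))/(r+1) := by
    have e : (1 - δ^(r+1))/(r+1) = (δ^(r+1) - 1)/(-(r+1)) := by
      rw [div_eq_div_iff (by linarith) (by linarith)]; ring
    rw [e, div_le_div_iff₀ (by positivity) hM0]
    nlinarith [mul_nonneg (sub_nonneg.2 hA2) hQ.le, mul_le_mul_of_nonneg_left hMle hA0.le]
  have hreal : (1/(2*((1-α)*q))) * δ^(1+α*s) ≤ ∫ x in Ioc δ 1, (δ * x^(α-1))^s := by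
    rw [hJ]
    calc (1/(2*((1-α)*q))) * δ^(1+α*s) = δ^s * (δ^(r+1) / (2*((1-α)*q))) := by
          rw [← hBA]; ring
      _ ≤ δ^s * ((1 - δ^(r+1))/(r+1)) := mul_le_mul_of_nonneg_left step1 hB0.le
  calc ENNReal.ofReal ((1/(2*((1-α)*q))) * δ^(1+α*s))
      ≤ ENNReal.ofReal (∫ x in Ioc δ 1, (δ * x^(α-1))^s) := ENNReal.ofReal_le_ofReal hreal
    _ = ∫⁻ x in Ioc δ 1, ENNReal.ofReal ((δ * x^(α-1))^s) :=
        ofReal_integral_eq_lintegral_ofReal hint hnn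
    _ ≤ ∫⁻ x in Ioc δ 1, (riemannLiouville α ((Ioo (0:ℝ) δ).indicator 1) x) ^ s := by
        apply lintegral_mono_ae
        rw [ae_restrict_iff' measurableSet_Ioc]
        apply Filter.Eventually.of_forall
        intro x hx
        have hx0 : (0:ℝ) < x := lt_trans hδ0 hx.1
        rw [← ENNReal.ofReal_rpow_of_pos (mul_pos hδ0 (rpow_pos_of_pos hx0 _))]
        exact ENNReal.rpow_le_rpow (rl_lower hα1 hδ0 hx) hs0.le
    _ ≤ ∫⁻ x in Icc (0:ℝ) 1, (riemannLiouville α ((Ioo (0:ℝ) δ).indicator 1) x) ^ s :=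
        lintegral_mono_set (fun x hx => ⟨le_of_lt (lt_trans hδ0 hx.1), hx.2⟩)

end Aux

set_option maxHeartbeats 2000000 in
/-- **Section 4 (for `R_α`).** Let `0<α<1`, `1<p<1/α`, `q=p/(1-αp)` and `θ₂ < θ₁ q/p`.
Then `R_α` is not bounded from `L^{p),θ₁}([0,1])` to `L^{q),θ₂}([0,1])`; in fact for every
`c>0` there is `n ∈ ℕ` such that `f = χ_{(0,1/(2n))}` violates the bound. -/
theorem riemannLiouville_not_bounded_grand (α p q θ₁ θ₂ : ℝ)
    (hα0 : 0 < α) (hα1 : α < 1) (hp : 1 < p) (hpα : p < 1 / α)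
    (hq : q = p / (1 - α * p)) (hθ₁ : 0 < θ₁) (hθ₂ : 0 < θ₂)
    (hθ : θ₂ < θ₁ * q / p) :
    (¬ ∃ c : ℝ, 0 < c ∧ ∀ f : ℝ → ℝ, Measurable f → (∀ x, 0 ≤ f x) →
        grandNormE q θ₂ (riemannLiouville α f) ≤ ENNReal.ofReal c * grandNorm p θ₁ f) ∧
    (∀ c : ℝ, 0 < c → ∃ n : ℕ, 0 < n ∧
        ENNReal.ofReal c *
            grandNorm p θ₁ ((Set.Ioo (0 : ℝ) (1 / (2 * (n : ℝ)))).indicator 1) <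
          grandNormE q θ₂
            (riemannLiouville α ((Set.Ioo (0 : ℝ) (1 / (2 * (n : ℝ)))).indicator 1))) := by
  classical
  open Real Filter in
  -- basic consequences of the hypotheses
  have hp0 : (0:ℝ) < p := lt_trans one_pos hp
  have hαp : α * p < 1 := by
    have h := (lt_div_iff₀ hα0).mp hpα
    nlinarith
  have h1mq : (0:ℝ) < 1 - α*p := by linarith
  have hq0 : (0:ℝ) < q := by rw [hq]; positivity
  have hqq : q * (1 - α*p) = p := by rw [hq]; field_simp; exact div_self (ne_of_gt (by nlinarith))
  have hpq : p < q := by nlinarith [mul_pos hq0 (mul_pos hα0 hp0)]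
  have hq1 : (1:ℝ) < q := lt_trans hp hpq
  have hαeq : α = 1/p - 1/q := by
    field_simp
    nlinarith [hqq]
  have hθ' : θ₂ * p < θ₁ * q := by
    have h := (lt_div_iff₀ hp0).mp hθ
    linarith
  -- the auxiliary exponents
  obtain ⟨β, hβdef⟩ : ∃ β : ℝ, (θ₂/q + θ₁/p)/2 = β := ⟨_, rfl⟩
  have hβ0 : 0 < β := by rw [← hβdef]; positivity
  have hθq : θ₂/q < θ₁/p := by
    rw [div_lt_div_iff₀ hq0 hp0]
    linarith
  have hββ : θ₂ < q * β := by
    have h1 : θ₂/q < β := by rw [← hβdef]; linarith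
    have := (div_lt_iff₀ hq0).mp h1
    linarith
  have hβθ : β < θ₁/p := by rw [← hβdef]; linarith
  obtain ⟨γ, hγdef⟩ : ∃ γ : ℝ, (β*p/θ₁ + 1)/2 = γ := ⟨_, rfl⟩
  have hβpθ : β*p/θ₁ < 1 := by
    rw [div_lt_one hθ₁]
    exact (lt_div_iff₀ hp0).mp hβθ
  have hγ1 : γ < 1 := by rw [← hγdef]; linarith
  have hγ2 : β * p / θ₁ < γ := by rw [← hγdef]; linarith
  obtain ⟨c₂, hc₂def⟩ : ∃ c₂ : ℝ, 1/(2*((1-α)*q)) = c₂ := ⟨_, rfl⟩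
  have h1α : (0:ℝ) < 1 - α := by linarith
  have hc₂ : 0 < c₂ := by rw [← hc₂def]; positivity
  obtain ⟨A₀, hA₀def⟩ : ∃ A₀ : ℝ, (1-α)*q - 1 = A₀ := ⟨_, rfl⟩
  have hαq : α*q = q/p - 1 := by
    rw [hαeq]
    field_simp
  have hA₀ : 0 < A₀ := by
    have h := div_lt_self hq0 hp
    rw [← hA₀def]
    nlinarith
  -- the main quantitative statement
  have key : ∀ c : ℝ, 0 < c → ∃ n : ℕ, 0 < n ∧
      ENNReal.ofReal c *
          grandNorm p θ₁ ((Set.Ioo (0 : ℝ) (1 / (2 * (n : ℝ)))).indicator 1) <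
        grandNormE q θ₂
          (riemannLiouville α ((Set.Ioo (0 : ℝ) (1 / (2 * (n : ℝ)))).indicator 1)) := by
    intro c hc
    -- eventual conditions on `L`
    have E2 : ∀ᶠ L in atTop, p ^ 2 * (β * log L) ≤ L ^ (1 - γ) := by
      have hlt : (0:ℝ) < 1 - γ := by linarith
      have h := (isLittleO_log_rpow_atTop hlt).bound
        (show (0:ℝ) < (p^2*β)⁻¹ by positivity)
      filter_upwards [h, eventually_ge_atTop (1:ℝ)] with L h1 h2
      rw [Real.norm_eq_abs, Real.norm_eq_abs, abs_of_nonneg (log_nonneg h2),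
        abs_of_nonneg (rpow_nonneg (by linarith) _)] at h1
      have h3 := mul_le_mul_of_nonneg_left h1 (show (0:ℝ) ≤ p^2*β by positivity)
      have h4 : p^2*β*((p^2*β)⁻¹ * L^(1-γ)) = L^(1-γ) := by field_simp
      nlinarith
    have E3 : ∀ᶠ L in atTop, L⁻¹ < q - 1 :=
      tendsto_inv_atTop_zero.eventually (gt_mem_nhds (show (0:ℝ) < q - 1 by linarith))
    have E4 : ∀ᶠ L in atTop, L⁻¹ < (q*β - θ₂)/(2*β) :=
      tendsto_inv_atTop_zero.eventually (gt_mem_nhds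
        (show (0:ℝ) < (q*β - θ₂)/(2*β) by
          apply div_pos (by linarith) (by linarith)))
    have E5 : ∀ᶠ L in atTop,
        q * |log c + θ₁ * log p| + 1/q + |log c₂| < ((q*β - θ₂)/2) * log L :=
      (tendsto_log_atTop.const_mul_atTop
        (show (0:ℝ) < (q*β - θ₂)/2 by linarith)).eventually_gt_atTop _
    have E6 : ∀ᶠ L in atTop, log 2 + (1-α) ≤ A₀ * L :=
      (tendsto_id.const_mul_atTop hA₀).eventually_ge_atTop _
    have hev := (eventually_ge_atTop (1:ℝ)).and (E2.and (E3.and (E4.and (E5.and E6))))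
    have hten : Tendsto (fun n : ℕ => Real.log (2*(n:ℝ))) atTop atTop :=
      Real.tendsto_log_atTop.comp
        (Filter.Tendsto.const_mul_atTop two_pos tendsto_natCast_atTop_atTop)
    obtain ⟨n, hn1, hL1, hE2, hE3, hE4, hE5, hE6⟩ :=
      ((eventually_ge_atTop 1).and (hten.eventually hev)).exists
    refine ⟨n, hn1, ?_⟩
    set L : ℝ := Real.log (2*(n:ℝ)) with hLdef
    have hn0 : (0:ℝ) < (n:ℝ) := by exact_mod_cast hn1
    have h2n : (0:ℝ) < 2*(n:ℝ) := by positivity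
    have hL0 : (0:ℝ) < L := lt_of_lt_of_le one_pos hL1
    set δ : ℝ := 1 / (2 * (n:ℝ)) with hδdef
    have hδexp : δ = Real.exp (-L) := by
      rw [hδdef, Real.exp_neg, Real.exp_log h2n, one_div]
    have hδ0 : 0 < δ := by rw [hδdef]; positivity
    have hn1' : (1:ℝ) ≤ (n:ℝ) := by exact_mod_cast hn1
    have hδ1 : δ ≤ 1 := by
      rw [hδdef, div_le_one h2n]
      linarith
    -- denominator bound
    have hden : grandNorm p θ₁ ((Set.Ioo (0:ℝ) δ).indicator 1)
        ≤ ENNReal.ofReal (p^θ₁ * Real.exp (-(L/p)) * L^(-β)) := by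
      simp only [grandNorm, grandNormE]
      apply iSup₂_le
      intro ε hε
      rw [lint_eval hδ0 hδ1 (show (0:ℝ) < p - ε by linarith [hε.2]),
        ← ENNReal.ofReal_mul (rpow_nonneg hε.1.le _),
        ENNReal.ofReal_rpow_of_pos (mul_pos (rpow_pos_of_pos hε.1 _) hδ0)]
      apply ENNReal.ofReal_le_ofReal
      rw [hδexp]
      exact den_core hp hθ₁ hβ0 hγ1 hγ2 hL1 hE2 ε hε
    -- numerator bound
    have hε₂mem : L⁻¹ ∈ Set.Ioo (0:ℝ) (q - 1) := ⟨by positivity, hE3⟩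
    have hLinv1 : L⁻¹ ≤ 1 := inv_le_one_of_one_le₀ hL1
    have hs0 : (0:ℝ) < q - L⁻¹ := by linarith
    have hsq : q - L⁻¹ ≤ q := by
      have : (0:ℝ) < L⁻¹ := by positivity
      linarith
    have hLL : L⁻¹ * L = 1 := inv_mul_cancel₀ (ne_of_gt hL0)
    have hm'pos : 0 < (1-α)*(q - L⁻¹) - 1 := by
      have e : ((1-α)*(q - L⁻¹) - 1) * L = A₀ * L - (1-α) := by
        linear_combination L * hA₀def - (1-α) * hLL
      have h2 : 0 < ((1-α)*(q - L⁻¹) - 1) * L := by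
        rw [e]
        have := Real.log_pos (by norm_num : (1:ℝ) < 2)
        linarith
      by_contra hcon
      push_neg at hcon
      exact absurd h2 (not_lt.mpr (mul_nonpos_iff.mpr (Or.inr ⟨hcon, hL0.le⟩)))
    have h2cond : 2 ≤ δ ^ (1 - (1-α)*(q - L⁻¹)) := by
      rw [hδexp, ← Real.exp_mul]
      have e : -L * (1 - (1-α)*(q - L⁻¹)) = A₀ * L - (1-α) := by
        linear_combination L * hA₀def - (1-α) * hLL
      rw [e]
      calc (2:ℝ) = Real.exp (Real.log 2) := (Real.exp_log two_pos).symm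
        _ ≤ Real.exp (A₀ * L - (1-α)) := by
            rw [Real.exp_le_exp]; linarith
    have hnum := num_lint hα1 hδ0 hδ1 hs0 hq0 hsq hm'pos h2cond
    -- real positivity for the middle comparison
    have hmidpos : (0:ℝ) <
        ((L⁻¹)^θ₂ * (c₂ * δ^(1+α*(q - L⁻¹))))^(1/(q - L⁻¹)) := by
      apply rpow_pos_of_pos
      exact mul_pos (rpow_pos_of_pos (by positivity) _)
        (mul_pos hc₂ (rpow_pos_of_pos hδ0 _))
    have hδpow : δ^(1+α*(q - L⁻¹)) = Real.exp (-((1 + α*(q - L⁻¹))*L)) := by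
      rw [hδexp, ← Real.exp_mul]
      congr 1
      ring
    -- assemble
    calc ENNReal.ofReal c * grandNorm p θ₁ ((Set.Ioo (0:ℝ) δ).indicator 1)
        ≤ ENNReal.ofReal c * ENNReal.ofReal (p^θ₁ * Real.exp (-(L/p)) * L^(-β)) :=
          mul_le_mul_right hden _
      _ = ENNReal.ofReal (c * (p^θ₁ * Real.exp (-(L/p)) * L^(-β))) :=
          (ENNReal.ofReal_mul hc.le).symm
      _ < ENNReal.ofReal (((L⁻¹)^θ₂ * (c₂ * δ^(1+α*(q - L⁻¹))))^(1/(q - L⁻¹))) := by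
          rw [ENNReal.ofReal_lt_ofReal_iff hmidpos, hδpow]
          exact num_core hαeq hp0 hq1 hc hβ0 hc₂ hL1 hE4.le hE5
      _ = (ENNReal.ofReal ((L⁻¹)^θ₂) *
            ENNReal.ofReal (c₂ * δ^(1+α*(q - L⁻¹))))^(1/(q - L⁻¹)) := by
          rw [← ENNReal.ofReal_mul (rpow_nonneg (by positivity) _),
            ENNReal.ofReal_rpow_of_pos
              (mul_pos (rpow_pos_of_pos (by positivity) _)
                (mul_pos hc₂ (rpow_pos_of_pos hδ0 _)))]
      _ ≤ (ENNReal.ofReal ((L⁻¹)^θ₂) *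
            ∫⁻ x in Set.Icc (0:ℝ) 1,
              (riemannLiouville α ((Set.Ioo (0:ℝ) δ).indicator 1) x)^(q - L⁻¹))
              ^(1/(q - L⁻¹)) := by
          apply ENNReal.rpow_le_rpow _ (by positivity)
          apply mul_le_mul_right
          calc ENNReal.ofReal (c₂ * δ^(1+α*(q - L⁻¹)))
              = ENNReal.ofReal ((1/(2*((1-α)*q))) * δ^(1+α*(q - L⁻¹))) := by
                rw [hc₂def]
            _ ≤ _ := hnum
      _ ≤ grandNormE q θ₂
            (riemannLiouville α ((Set.Ioo (0:ℝ) δ).indicator 1)) := by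
          simp only [grandNormE]
          exact le_iSup₂ (f := fun ε (_ : ε ∈ Set.Ioo (0:ℝ) (q-1)) =>
            (ENNReal.ofReal (ε ^ θ₂) *
              ∫⁻ t in Set.Icc (0:ℝ) 1,
                riemannLiouville α ((Set.Ioo (0:ℝ) δ).indicator 1) t ^ (q - ε))
              ^ (1 / (q - ε))) L⁻¹ hε₂mem
  refine ⟨?_, key⟩
  rintro ⟨c, hc, hbound⟩
  obtain ⟨n, hn, hlt⟩ := key c hc
  have hmeas : Measurable ((Set.Ioo (0:ℝ) (1 / (2 * (n:ℝ)))).indicator (1 : ℝ → ℝ)) :=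
    measurable_one.indicator measurableSet_Ioo
  have hnonneg : ∀ x, 0 ≤ ((Set.Ioo (0:ℝ) (1 / (2 * (n:ℝ)))).indicator (1 : ℝ → ℝ)) x :=
    fun x => Set.indicator_apply_nonneg fun _ => zero_le_one
  exact lt_irrefl _ (lt_of_lt_of_le hlt (hbound _ hmeas hnonneg))
end

section
/- Let 0<α<1, 1<p<1/α, q=p/(1−αp), and let θ₁, θ₂ be positive numbers with θ₂ < θ₁ q/p (equivalently θ₂ < (1+αq)θ₁). Then the one-sided Weyl operator W_α is not bounded from L^{p),θ₁}([0,1]) to L^{q),θ₂}([0,1]): there is no constant c>0 such that ‖W_α f‖_{L^{q),θ₂}([0,1])} ≤ c‖f‖_{L^{p),θ₁}([0,1])} holds for all nonnegative measurable f on [0,1]; in fact, for every c>0 there exists n ∈ ℕ such that ‖W_α χ_{(1−1/(2n), 1−1/(3n))}‖_{L^{q),θ₂}([0,1])} > c‖χ_{(1−1/(2n), 1−1/(3n))}‖_{L^{p),θ₁}([0,1])}. -/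
open MeasureTheory Set
open scoped ENNReal
set_option maxHeartbeats 1000000

/-- The one-sided (Weyl) potential `(W_α f)(x) = ∫_x^1 f(t)/(t-x)^{1-α} dt`
of a nonnegative function, with values in `ℝ≥0∞`. -/
noncomputable def weylPotential (α : ℝ) (f : ℝ → ℝ) (x : ℝ) : ℝ≥0∞ :=
  ∫⁻ t in Set.Ioo x (1 : ℝ), ENNReal.ofReal (f t) / ENNReal.ofReal ((t - x) ^ (1 - α))



/-- Step A: sharp upper bound `(ε^θ δ)^{1/(p-ε)} ≤ K₁ (θp)^{θ/p} δ^{1/p} L^{-θ/p}`. -/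
lemma stepA {p θ δ L ε : ℝ} (hp : 1 < p) (hθ : 0 < θ) (hL : 0 < L)
    (hδL : δ = Real.exp (-L)) (hi : θ * Real.log (p-1) ≤ L)
    (hε0 : 0 < ε) (hεp : ε < p - 1) :
    (ε ^ θ * δ) ^ (1/(p-ε)) ≤
      (max 1 ((p-1) ^ (θ*(p-1)/p^2)) * (θ*p) ^ (θ/p)) * (δ ^ (1/p) * L ^ (-(θ/p))) := by
  have hp0 : (0:ℝ) < p := by linarith
  have hδ0 : 0 < δ := hδL ▸ Real.exp_pos _
  have hpε : 0 < p - ε := by linarith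
  have hx0 : 0 < ε ^ θ * δ := mul_pos (Real.rpow_pos_of_pos hε0 _) hδ0
  have hp1 : (0:ℝ) < p - 1 := by linarith
  -- x ≤ 1
  have hx1 : ε ^ θ * δ ≤ 1 := by
    have h1 : ε ^ θ ≤ (p-1) ^ θ := Real.rpow_le_rpow hε0.le (by linarith) hθ.le
    have h2 : (p-1) ^ θ = Real.exp (θ * Real.log (p-1)) := by
      rw [Real.rpow_def_of_pos hp1, mul_comm]
    have h3 : ε ^ θ * δ ≤ Real.exp (θ * Real.log (p-1)) * Real.exp (-L) := by
      rw [← h2, ← hδL]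
      exact mul_le_mul_of_nonneg_right h1 hδ0.le
    calc ε ^ θ * δ ≤ Real.exp (θ * Real.log (p-1)) * Real.exp (-L) := h3
      _ = Real.exp (θ * Real.log (p-1) - L) := by rw [← Real.exp_add]; ring_nf
      _ ≤ Real.exp 0 := Real.exp_le_exp.2 (by linarith)
      _ = 1 := Real.exp_zero
  -- exponent comparison
  have hexp : 1/p + ε/p^2 ≤ 1/(p-ε) := by
    rw [div_add_div _ _ (ne_of_gt hp0) (by positivity), div_le_div_iff₀ (by positivity) hpε]
    nlinarith [sq_nonneg ε, mul_pos hε0 hpε]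
  have step1 : (ε ^ θ * δ) ^ (1/(p-ε)) ≤ (ε ^ θ * δ) ^ (1/p + ε/p^2) :=
    Real.rpow_le_rpow_of_exponent_ge hx0 hx1 hexp
  have hsplit : (ε ^ θ * δ) ^ (1/p + ε/p^2)
      = (ε ^ (θ*ε/p^2)) * (ε ^ (θ/p) * δ ^ (ε/p^2)) * δ ^ (1/p) := by
    rw [Real.rpow_add hx0, Real.mul_rpow (Real.rpow_pos_of_pos hε0 _).le hδ0.le,
        Real.mul_rpow (Real.rpow_pos_of_pos hε0 _).le hδ0.le,
        ← Real.rpow_mul hε0.le, ← Real.rpow_mul hε0.le]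
    ring_nf
  -- bound ε^{θε/p²} ≤ K₁
  have hK1 : ε ^ (θ*ε/p^2) ≤ max 1 ((p-1) ^ (θ*(p-1)/p^2)) := by
    rcases le_or_gt ε 1 with h | h
    · exact le_trans (Real.rpow_le_one hε0.le h (by positivity)) (le_max_left _ _)
    · have hb1 : (1:ℝ) < p - 1 := lt_trans h hεp
      calc ε ^ (θ*ε/p^2) ≤ (p-1) ^ (θ*ε/p^2) :=
            Real.rpow_le_rpow hε0.le hεp.le (by positivity)
        _ ≤ (p-1) ^ (θ*(p-1)/p^2) := by
            apply Real.rpow_le_rpow_of_exponent_le hb1.le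
            apply div_le_div_of_nonneg_right _ (by positivity)
            · exact mul_le_mul_of_nonneg_left hεp.le hθ.le
        _ ≤ max 1 ((p-1) ^ (θ*(p-1)/p^2)) := le_max_right _ _
  -- bound ε^{θ/p} δ^{ε/p²} ≤ (θp)^{θ/p} L^{-θ/p}
  have hmid : ε ^ (θ/p) * δ ^ (ε/p^2) ≤ (θ*p) ^ (θ/p) * L ^ (-(θ/p)) := by
    have hm0 : 0 < θ*p/L := by positivity
    have hlog : Real.log ε ≤ Real.log (θ*p/L) + ε/(θ*p/L) - 1 := by
      have := Real.log_le_sub_one_of_pos (show 0 < ε/(θ*p/L) by positivity)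
      rw [Real.log_div (ne_of_gt hε0) (ne_of_gt hm0)] at this
      linarith
    have hclaim : (θ/p) * Real.log ε + (-(L*ε/p^2)) ≤ (θ/p) * Real.log (θ*p/L) := by
      have e1 : (θ/p) * (ε/(θ*p/L)) = L*ε/p^2 := by field_simp
      have h2 : (θ/p) * Real.log ε ≤ (θ/p) * (Real.log (θ*p/L) + ε/(θ*p/L) - 1) :=
        mul_le_mul_of_nonneg_left hlog (by positivity)
      have h3 : (θ/p) * (Real.log (θ*p/L) + ε/(θ*p/L) - 1)
          = (θ/p) * Real.log (θ*p/L) + L*ε/p^2 - θ/p := by rw [mul_sub, mul_add, e1]; ring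
      have : 0 ≤ θ/p := by positivity
      linarith
    have e2 : ε ^ (θ/p) * δ ^ (ε/p^2) = Real.exp ((θ/p) * Real.log ε + (-(L*ε/p^2))) := by
      rw [Real.exp_add, Real.rpow_def_of_pos hε0, mul_comm (Real.log ε), hδL,
          ← Real.exp_mul]
      ring_nf
    have e3 : (θ*p/L) ^ (θ/p) = Real.exp ((θ/p) * Real.log (θ*p/L)) := by
      rw [Real.rpow_def_of_pos hm0, mul_comm]
    calc ε ^ (θ/p) * δ ^ (ε/p^2) = Real.exp ((θ/p) * Real.log ε + (-(L*ε/p^2))) := e2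
      _ ≤ Real.exp ((θ/p) * Real.log (θ*p/L)) := Real.exp_le_exp.2 hclaim
      _ = (θ*p/L) ^ (θ/p) := e3.symm
      _ = (θ*p) ^ (θ/p) * L ^ (-(θ/p)) := by
          rw [Real.div_rpow (by positivity) hL.le, Real.rpow_neg hL.le, div_eq_mul_inv]
  calc (ε ^ θ * δ) ^ (1/(p-ε)) ≤ (ε ^ θ * δ) ^ (1/p + ε/p^2) := step1
    _ = (ε ^ (θ*ε/p^2)) * (ε ^ (θ/p) * δ ^ (ε/p^2)) * δ ^ (1/p) := hsplit
    _ ≤ (max 1 ((p-1) ^ (θ*(p-1)/p^2))) * ((θ*p) ^ (θ/p) * L ^ (-(θ/p))) * δ ^ (1/p) := by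
        apply mul_le_mul_of_nonneg_right _ (Real.rpow_nonneg hδ0.le _)
        exact mul_le_mul hK1 hmid (by positivity) (le_trans zero_le_one (le_max_left _ _))
    _ = (max 1 ((p-1) ^ (θ*(p-1)/p^2)) * (θ*p) ^ (θ/p)) * (δ ^ (1/p) * L ^ (-(θ/p))) := by
        ring


lemma ind_integral {a b r : ℝ} (h0 : 0 ≤ a) (hab : a < b) (hb1 : b ≤ 1) (hr : 0 < r) :
    ∫⁻ t in Icc (0:ℝ) 1, (ENNReal.ofReal |(Ioo a b).indicator 1 t|) ^ r
      = ENNReal.ofReal (b - a) := by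
  have hsub : Ioo a b ⊆ Icc (0:ℝ) 1 := fun x hx => ⟨by linarith [hx.1], by linarith [hx.2]⟩
  calc ∫⁻ t in Icc (0:ℝ) 1, (ENNReal.ofReal |(Ioo a b).indicator 1 t|) ^ r
      = ∫⁻ t in Icc (0:ℝ) 1, (Ioo a b).indicator (fun _ => (1:ENNReal)) t := by
        apply lintegral_congr
        intro t
        by_cases h : t ∈ Ioo a b
        · simp [Set.indicator_of_mem h]
        · simp [Set.indicator_of_notMem h, ENNReal.zero_rpow_of_pos hr]
    _ = ∫⁻ _ in Ioo a b, (1:ENNReal) ∂(volume.restrict (Icc (0:ℝ) 1)) :=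
        lintegral_indicator measurableSet_Ioo _
    _ = 1 * (volume.restrict (Icc (0:ℝ) 1)) (Ioo a b) := setLIntegral_const _ _
    _ = ENNReal.ofReal (b - a) := by
        rw [one_mul, Measure.restrict_apply measurableSet_Ioo, inter_eq_left.2 hsub,
          Real.volume_Ioo]


lemma weyl_lower {α a b x : ℝ} (hα1 : α < 1) (hab : a < b) (hb1 : b ≤ 1)
    (hx : a - (b - a) < x) (hxa : x < a) :
    ENNReal.ofReal ((2*(b-a)) ^ (α-1) * (b-a)) ≤ weylPotential α ((Ioo a b).indicator 1) x := by
  have hδ0 : 0 < b - a := by linarith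
  have h2δ : 0 < 2*(b-a) := by linarith
  have h1 : Ioo a b ⊆ Ioo x 1 := fun t ht => ⟨lt_trans hxa ht.1, lt_of_lt_of_le ht.2 hb1⟩
  have key : ∀ t ∈ Ioo a b, ENNReal.ofReal ((2*(b-a)) ^ (α-1)) ≤
      ENNReal.ofReal (((Ioo a b).indicator 1) t) / ENNReal.ofReal ((t - x) ^ (1-α)) := by
    intro t ht
    have htx : 0 < t - x := by linarith [ht.1]
    have htx2 : t - x ≤ 2*(b-a) := by linarith [ht.2, hx]
    have hpow : (t-x) ^ (1-α) ≤ (2*(b-a)) ^ (1-α) :=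
      Real.rpow_le_rpow htx.le htx2 (by linarith)
    have hpow0 : (0:ℝ) < (t-x) ^ (1-α) := Real.rpow_pos_of_pos htx _
    rw [Set.indicator_of_mem ht, Pi.one_apply, ENNReal.ofReal_one,
      show α - 1 = -(1-α) by ring, Real.rpow_neg h2δ.le,
      ENNReal.ofReal_inv_of_pos (Real.rpow_pos_of_pos h2δ _), one_div]
    exact ENNReal.inv_le_inv' (ENNReal.ofReal_le_ofReal hpow)
  calc ENNReal.ofReal ((2*(b-a)) ^ (α-1) * (b-a))
      = ENNReal.ofReal ((2*(b-a)) ^ (α-1)) * volume (Ioo a b) := by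
        rw [Real.volume_Ioo, ENNReal.ofReal_mul (Real.rpow_nonneg h2δ.le _)]
    _ = ∫⁻ _ in Ioo a b, ENNReal.ofReal ((2*(b-a)) ^ (α-1)) := (setLIntegral_const _ _).symm
    _ ≤ ∫⁻ t in Ioo a b, ENNReal.ofReal (((Ioo a b).indicator 1) t)
          / ENNReal.ofReal ((t - x) ^ (1-α)) := setLIntegral_mono' measurableSet_Ioo key
    _ ≤ weylPotential α ((Ioo a b).indicator 1) x := lintegral_mono_set h1


lemma stepC {α p q θ₁ θ₂ cK L δ : ℝ}
    (hp : 1 < p) (hq : 1 < q) (hα : α = 1/p - 1/q) (hθ₂ : 0 < θ₂) (hθ₁ : 0 < θ₁)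
    (hβ : θ₂/q < θ₁/p) (hcK : 0 < cK) (hδL : δ = Real.exp (-L))
    (hL2 : θ₂*q ≤ L) (hL1 : θ₂*q/(q-1) < L)
    (hL3 : θ₂*q*(2*θ₂/Real.log 2)^2 ≤ L)
    (hL4 : (cK/((2:ℝ) ^ (α-1) * Real.exp (-θ₂) * (1/2) * (θ₂*q) ^ (θ₂/q)))^((θ₁/p - θ₂/q)⁻¹) < L) :
    cK * (δ ^ (1/p) * L ^ (-(θ₁/p))) <
      (θ₂*q/L) ^ (θ₂/(q - θ₂*q/L)) * ((2:ℝ) ^ (α-1) * δ ^ α) * δ ^ (1/(q - θ₂*q/L)) := by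
  have hL0 : 0 < L := lt_of_lt_of_le (by positivity) hL2
  have hq0 : (0:ℝ) < q := by linarith
  obtain ⟨ε₂, hε₂def⟩ : ∃ e, e = θ₂*q/L := ⟨_, rfl⟩
  rw [← hε₂def]
  have hLε : L * ε₂ = θ₂*q := by rw [hε₂def]; field_simp
  have hθq : 0 < θ₂ * q := by positivity
  have hε₂0 : 0 < ε₂ := by nlinarith
  have hε₂1 : ε₂ ≤ 1 := by nlinarith
  have hε₂q : ε₂ < q - 1 := by
    have h := (div_lt_iff₀ (show (0:ℝ) < q - 1 by linarith)).1 hL1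
    nlinarith
  have hqε1 : 1 < q - ε₂ := by linarith
  have hqε0 : 0 < q - ε₂ := by linarith
  have hδ0 : 0 < δ := hδL ▸ Real.exp_pos _
  set c₂ := (2:ℝ) ^ (α-1) * Real.exp (-θ₂) * (1/2) * (θ₂*q) ^ (θ₂/q) with hc₂def
  have hc₂0 : 0 < c₂ := by positivity
  set β := θ₁/p - θ₂/q with hβdef
  have hβ0 : 0 < β := by rw [hβdef]; linarith
  have hlogδ : Real.log δ = -L := by rw [hδL, Real.log_exp]
  set s := 1/(q-ε₂) - 1/q with hsdef
  have hLs : L * s = θ₂/(q-ε₂) := by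
    rw [hsdef, mul_sub, mul_one_div, mul_one_div,
      div_sub_div _ _ (ne_of_gt hqε0) (ne_of_gt hq0),
      div_eq_div_iff (by positivity) (ne_of_gt hqε0)]
    linear_combination (q - ε₂) * hLε
  -- (E1)
  have hE1 : Real.exp (-θ₂) ≤ δ ^ s := by
    rw [Real.rpow_def_of_pos hδ0, hlogδ]
    apply Real.exp_le_exp.2
    have h1 : θ₂/(q-ε₂) ≤ θ₂ := by
      rw [div_le_iff₀ hqε0]; nlinarith
    have h2 : -L * s = -(L*s) := by ring
    rw [h2, hLs]
    have : 0 < θ₂/(q-ε₂) := by positivity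
    linarith
  -- (E2)
  have hE2 : (1/2) * ((θ₂*q) ^ (θ₂/q) * L ^ (-(θ₂/q))) ≤ ε₂ ^ (θ₂/(q-ε₂)) := by
    set r := θ₂/(q-ε₂) - θ₂/q with hrdef
    have hrle : r ≤ θ₂ * ε₂ := by
      rw [hrdef, div_sub_div _ _ (ne_of_gt hqε0) (ne_of_gt hq0), div_le_iff₀ (by positivity)]
      have hq1 : 1 ≤ (q-ε₂)*q := by nlinarith
      have h8 : θ₂*ε₂*1 ≤ θ₂*ε₂*((q-ε₂)*q) := mul_le_mul_of_nonneg_left hq1 (by positivity)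
      nlinarith [h8]
    have hsplit : ε₂ ^ (θ₂/(q-ε₂)) = ε₂ ^ (θ₂/q) * ε₂ ^ r := by
      rw [← Real.rpow_add hε₂0, hrdef]; ring_nf
    have h1 : ε₂ ^ (θ₂*ε₂) ≤ ε₂ ^ r :=
      Real.rpow_le_rpow_of_exponent_ge hε₂0 hε₂1 hrle
    have hlog2 : 0 < Real.log 2 := Real.log_pos (by norm_num)
    have hw : Real.sqrt ε₂ ≤ Real.log 2 / (2*θ₂) := by
      have hB : ε₂ ≤ (Real.log 2 / (2*θ₂))^2 := by
        have e : (Real.log 2/(2*θ₂))^2 * (θ₂*q*(2*θ₂/Real.log 2)^2) = θ₂*q := by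
          field_simp
        have h5 : θ₂*q ≤ (Real.log 2/(2*θ₂))^2 * L := by
          calc θ₂*q = (Real.log 2/(2*θ₂))^2 * (θ₂*q*(2*θ₂/Real.log 2)^2) := e.symm
            _ ≤ (Real.log 2/(2*θ₂))^2 * L := mul_le_mul_of_nonneg_left hL3 (by positivity)
        nlinarith [hLε]
      calc Real.sqrt ε₂ ≤ Real.sqrt ((Real.log 2/(2*θ₂))^2) := Real.sqrt_le_sqrt hB
        _ = Real.log 2/(2*θ₂) := Real.sqrt_sq (by positivity)
    have hloge : θ₂ * ε₂ * (-Real.log ε₂) ≤ Real.log 2 := by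
      set w := Real.sqrt ε₂ with hwdef
      have hw0 : 0 < w := Real.sqrt_pos.2 hε₂0
      have hww : ε₂ = w * w := (Real.mul_self_sqrt hε₂0.le).symm
      have hlw : -Real.log ε₂ ≤ 2/w := by
        have h3 : Real.log w⁻¹ ≤ w⁻¹ - 1 := Real.log_le_sub_one_of_pos (by positivity)
        rw [Real.log_inv] at h3
        rw [hww, Real.log_mul (ne_of_gt hw0) (ne_of_gt hw0)]
        have e2 : 2/w = 2*w⁻¹ := by rw [div_eq_mul_inv]
        linarith [h3, e2.le, e2.ge]
      calc θ₂ * ε₂ * (-Real.log ε₂) ≤ θ₂ * ε₂ * (2/w) :=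
            mul_le_mul_of_nonneg_left hlw (by positivity)
        _ = θ₂ * (2*w) := by rw [hww]; field_simp
        _ ≤ θ₂ * (2*(Real.log 2/(2*θ₂))) := by
            apply mul_le_mul_of_nonneg_left _ hθ₂.le
            linarith
        _ = Real.log 2 := by field_simp
    have h2 : (1/2 : ℝ) ≤ ε₂ ^ (θ₂*ε₂) := by
      rw [Real.rpow_def_of_pos hε₂0]
      have h6 : -Real.log 2 ≤ Real.log ε₂ * (θ₂*ε₂) := by nlinarith [hloge]
      calc (1/2 : ℝ) = Real.exp (-Real.log 2) := by
            rw [Real.exp_neg, Real.exp_log (by norm_num : (0:ℝ) < 2)]; norm_num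
        _ ≤ Real.exp (Real.log ε₂ * (θ₂*ε₂)) := Real.exp_le_exp.2 h6
    have h3 : ε₂ ^ (θ₂/q) = (θ₂*q) ^ (θ₂/q) * L ^ (-(θ₂/q)) := by
      rw [hε₂def, Real.div_rpow (by positivity) hL0.le, Real.rpow_neg hL0.le,
        div_eq_mul_inv]
    calc (1/2) * ((θ₂*q) ^ (θ₂/q) * L ^ (-(θ₂/q))) = (1/2) * ε₂ ^ (θ₂/q) := by rw [h3]
      _ ≤ ε₂ ^ (θ₂*ε₂) * ε₂ ^ (θ₂/q) :=
          mul_le_mul_of_nonneg_right h2 (Real.rpow_nonneg hε₂0.le _)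
      _ ≤ ε₂ ^ r * ε₂ ^ (θ₂/q) :=
          mul_le_mul_of_nonneg_right h1 (Real.rpow_nonneg hε₂0.le _)
      _ = ε₂ ^ (θ₂/(q-ε₂)) := by rw [hsplit]; ring
  -- (E3)
  have hLβ0 : 0 < L ^ β := Real.rpow_pos_of_pos hL0 _
  have hE3 : cK * L ^ (-(θ₁/p)) < c₂ * L ^ (-(θ₂/q)) := by
    have hLβ : cK/c₂ < L ^ β := by
      have h0 : (0:ℝ) ≤ cK/c₂ := by positivity
      calc cK/c₂ = ((cK/c₂) ^ β⁻¹) ^ β := (Real.rpow_inv_rpow h0 (ne_of_gt hβ0)).symm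
        _ < L ^ β := Real.rpow_lt_rpow (Real.rpow_nonneg h0 _) hL4 hβ0
    have h7 : cK < L ^ β * c₂ := (div_lt_iff₀ hc₂0).1 hLβ
    have hsplitL : L ^ (-(θ₁/p)) = L ^ (-(θ₂/q)) * L ^ (-β) := by
      rw [← Real.rpow_add hL0, hβdef]; ring_nf
    have h1 : cK * L ^ (-β) < c₂ := by
      have e : cK * L ^ (-β) = cK / L ^ β := by
        rw [Real.rpow_neg hL0.le, div_eq_mul_inv]
      rw [e, div_lt_iff₀ hLβ0]
      nlinarith
    calc cK * L ^ (-(θ₁/p)) = (cK * L ^ (-β)) * L ^ (-(θ₂/q)) := by rw [hsplitL]; ring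
      _ < c₂ * L ^ (-(θ₂/q)) :=
          mul_lt_mul_of_pos_right h1 (Real.rpow_pos_of_pos hL0 _)
  -- assemble
  have hδs : δ ^ α * δ ^ (1/(q-ε₂)) = δ ^ s * δ ^ (1/p) := by
    rw [← Real.rpow_add hδ0, ← Real.rpow_add hδ0, hα, hsdef]; ring_nf
  have hrearr : ε₂ ^ (θ₂/(q-ε₂)) * ((2:ℝ) ^ (α-1) * δ ^ α) * δ ^ (1/(q-ε₂))
      = (ε₂ ^ (θ₂/(q-ε₂)) * δ ^ s) * ((2:ℝ) ^ (α-1) * δ ^ (1/p)) := by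
    have : ε₂ ^ (θ₂/(q-ε₂)) * ((2:ℝ) ^ (α-1) * δ ^ α) * δ ^ (1/(q-ε₂))
        = ε₂ ^ (θ₂/(q-ε₂)) * (2:ℝ) ^ (α-1) * (δ ^ α * δ ^ (1/(q-ε₂))) := by ring
    rw [this, hδs]; ring
  have hmid : c₂ * L ^ (-(θ₂/q)) * δ ^ (1/p) ≤
      (ε₂ ^ (θ₂/(q-ε₂)) * δ ^ s) * ((2:ℝ) ^ (α-1) * δ ^ (1/p)) := by
    have e : c₂ * L ^ (-(θ₂/q)) * δ ^ (1/p)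
        = ((1/2) * ((θ₂*q) ^ (θ₂/q) * L ^ (-(θ₂/q))) * Real.exp (-θ₂))
            * ((2:ℝ) ^ (α-1) * δ ^ (1/p)) := by
      rw [hc₂def]; ring
    rw [e]
    apply mul_le_mul_of_nonneg_right _ (by positivity)
    exact mul_le_mul hE2 hE1 (Real.exp_pos _).le (Real.rpow_nonneg hε₂0.le _)
  calc cK * (δ ^ (1/p) * L ^ (-(θ₁/p))) = (cK * L ^ (-(θ₁/p))) * δ ^ (1/p) := by ring
    _ < (c₂ * L ^ (-(θ₂/q))) * δ ^ (1/p) :=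
        mul_lt_mul_of_pos_right hE3 (Real.rpow_pos_of_pos hδ0 _)
    _ ≤ (ε₂ ^ (θ₂/(q-ε₂)) * δ ^ s) * ((2:ℝ) ^ (α-1) * δ ^ (1/p)) := hmid
    _ = ε₂ ^ (θ₂/(q-ε₂)) * ((2:ℝ) ^ (α-1) * δ ^ α) * δ ^ (1/(q-ε₂)) := hrearr.symm


private lemma hCid_aux {δ e r α θ : ℝ} (hδ : 0 < δ) (he : 0 < e) (hr : 0 < r) :
    (e^θ * (((2*δ)^(α-1)*δ)^r * δ))^(1/r)
      = e^(θ/r) * ((2:ℝ)^(α-1) * δ^α) * δ^(1/r) := by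
  have hC : (0:ℝ) < (2*δ)^(α-1)*δ := by positivity
  rw [Real.mul_rpow (by positivity) (by positivity),
      Real.mul_rpow (by positivity) (by positivity),
      ← Real.rpow_mul he.le, ← Real.rpow_mul hC.le,
      mul_one_div, mul_one_div, div_self (ne_of_gt hr), Real.rpow_one]
  have h2 : (2*δ)^(α-1)*δ = 2^(α-1)*δ^α := by
    rw [Real.mul_rpow (by norm_num) hδ.le, mul_assoc,
      ← Real.rpow_add_one (ne_of_gt hδ), show α-1+1 = α from by ring]
  rw [h2]; ring

/-- **Section 4 (for `W_α`).** Let `0<α<1`, `1<p<1/α`, `q=p/(1-αp)` and `θ₂ < θ₁ q/p`.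
Then `W_α` is not bounded from `L^{p),θ₁}([0,1])` to `L^{q),θ₂}([0,1])`; in fact for every
`c>0` there is `n ∈ ℕ` such that `f = χ_{(1-1/(2n),1-1/(3n))}` violates the bound. -/
theorem weyl_not_bounded_grand (α p q θ₁ θ₂ : ℝ)
    (hα0 : 0 < α) (hα1 : α < 1) (hp : 1 < p) (hpα : p < 1 / α)
    (hq : q = p / (1 - α * p)) (hθ₁ : 0 < θ₁) (hθ₂ : 0 < θ₂)
    (hθ : θ₂ < θ₁ * q / p) :
    (¬ ∃ c : ℝ, 0 < c ∧ ∀ f : ℝ → ℝ, Measurable f → (∀ x, 0 ≤ f x) →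
        grandNormE q θ₂ (weylPotential α f) ≤ ENNReal.ofReal c * grandNorm p θ₁ f) ∧
    (∀ c : ℝ, 0 < c → ∃ n : ℕ, 0 < n ∧
        ENNReal.ofReal c *
            grandNorm p θ₁
              ((Set.Ioo (1 - 1 / (2 * (n : ℝ))) (1 - 1 / (3 * (n : ℝ)))).indicator 1) <
          grandNormE q θ₂
            (weylPotential α
              ((Set.Ioo (1 - 1 / (2 * (n : ℝ))) (1 - 1 / (3 * (n : ℝ)))).indicator 1))) := by
  have hp0 : (0:ℝ) < p := by linarith
  have hαp : α * p < 1 := by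
    have h := (lt_div_iff₀ hα0).1 hpα
    nlinarith
  have h1αp : 0 < 1 - α * p := by linarith
  have hq0 : (0:ℝ) < q := by rw [hq]; positivity
  have hqgtp : p < q := by
    rw [hq, lt_div_iff₀ h1αp]
    nlinarith [mul_pos (mul_pos hα0 hp0) hp0]
  have hq1 : 1 < q := lt_trans hp hqgtp
  have hα' : α = 1/p - 1/q := by
    rw [hq]
    field_simp
    ring
  have hβpos : θ₂/q < θ₁/p := by
    rw [div_lt_div_iff₀ hq0 hp0]
    have := (lt_div_iff₀ hp0).1 hθ
    nlinarith
  -- main quantitative claim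
  have key : ∀ c : ℝ, 0 < c → ∃ n : ℕ, 0 < n ∧
      ENNReal.ofReal c *
          grandNorm p θ₁
            ((Set.Ioo (1 - 1 / (2 * (n : ℝ))) (1 - 1 / (3 * (n : ℝ)))).indicator 1) <
        grandNormE q θ₂
          (weylPotential α
            ((Set.Ioo (1 - 1 / (2 * (n : ℝ))) (1 - 1 / (3 * (n : ℝ)))).indicator 1)) := by
    intro c hc
    set K := max 1 ((p-1) ^ (θ₁*(p-1)/p^2)) * (θ₁*p) ^ (θ₁/p) with hKdef
    have hK0 : 0 < K := by positivity
    set c₂ := (2:ℝ) ^ (α-1) * Real.exp (-θ₂) * (1/2) * (θ₂*q) ^ (θ₂/q) with hc₂def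
    have hc₂0 : 0 < c₂ := by positivity
    set L₀ := max (max (θ₁ * Real.log (p-1)) (θ₂*q))
      (max (max (θ₂*q/(q-1)) (θ₂*q*(2*θ₂/Real.log 2)^2))
        ((c*K/c₂) ^ ((θ₁/p - θ₂/q)⁻¹))) with hL₀def
    obtain ⟨n, hn⟩ := exists_nat_gt (Real.exp L₀)
    have hexp0 : (0:ℝ) < Real.exp L₀ := Real.exp_pos _
    have hn0 : 0 < n := by
      have : (0:ℝ) < n := lt_trans hexp0 hn
      exact_mod_cast this
    refine ⟨n, hn0, ?_⟩
    set N := (n:ℝ) with hNdef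
    have hN0 : (0:ℝ) < N := lt_trans hexp0 hn
    have hN1 : (1:ℝ) ≤ N := by rw [hNdef]; exact_mod_cast hn0
    set a := 1 - 1/(2*N) with hadef
    set b := 1 - 1/(3*N) with hbdef
    set δ := 1/(6*N) with hδdef
    set L := Real.log (6*N) with hLdef
    have h6N : (0:ℝ) < 6*N := by positivity
    have hδ0 : 0 < δ := by rw [hδdef]; positivity
    have hδeq : b - a = δ := by rw [hbdef, hadef, hδdef]; field_simp; ring
    have h2N : 1/(2*N) ≤ 1/2 :=
      one_div_le_one_div_of_le (by norm_num) (by linarith)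
    have h3N : (0:ℝ) < 1/(3*N) := by positivity
    have h6N' : 1/(6*N) ≤ 1/6 :=
      one_div_le_one_div_of_le (by norm_num) (by linarith)
    have hab : a < b := by
      rw [hadef, hbdef]
      have : 1/(3*N) < 1/(2*N) :=
        one_div_lt_one_div_of_lt (by linarith) (by linarith)
      linarith
    have ha0 : 0 ≤ a := by rw [hadef]; linarith
    have hb1 : b ≤ 1 := by rw [hbdef]; linarith
    have haδ0 : 0 ≤ a - δ := by rw [hadef, hδdef]; linarith
    have ha1 : a ≤ 1 := by
      rw [hadef]
      have : (0:ℝ) < 1/(2*N) := by positivity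
      linarith
    have hδL : δ = Real.exp (-L) := by
      rw [hδdef, hLdef, Real.exp_neg, Real.exp_log h6N, one_div]
    have hL₀L : L₀ < L := by
      rw [hLdef]
      calc L₀ = Real.log (Real.exp L₀) := (Real.log_exp _).symm
        _ < Real.log (6*N) := Real.log_lt_log hexp0 (by linarith)
    have hLA : θ₁ * Real.log (p-1) ≤ L :=
      le_of_lt (lt_of_le_of_lt (le_trans (le_max_left _ _) (le_max_left _ _)) hL₀L)
    have hL2 : θ₂*q ≤ L :=
      le_of_lt (lt_of_le_of_lt (le_trans (le_max_right _ _) (le_max_left _ _)) hL₀L)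
    have hL0 : 0 < L := lt_of_lt_of_le (by positivity) hL2
    have hL1 : θ₂*q/(q-1) < L :=
      lt_of_le_of_lt (le_trans (le_max_left _ _)
        (le_trans (le_max_left _ _) (le_max_right _ _))) hL₀L
    have hL3 : θ₂*q*(2*θ₂/Real.log 2)^2 ≤ L :=
      le_of_lt (lt_of_le_of_lt (le_trans (le_max_right _ _)
        (le_trans (le_max_left _ _) (le_max_right _ _))) hL₀L)
    have hL4 : (c*K/c₂) ^ ((θ₁/p - θ₂/q)⁻¹) < L :=
      lt_of_le_of_lt (le_trans (le_max_right _ _) (le_max_right _ _)) hL₀L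
    set ε₂ := θ₂*q/L with hε₂def
    have hε₂0 : 0 < ε₂ := by rw [hε₂def]; positivity
    have hε₂q : ε₂ < q - 1 := by
      rw [hε₂def, div_lt_iff₀ hL0]
      have h := (div_lt_iff₀ (show (0:ℝ) < q-1 by linarith)).1 hL1
      exact lt_of_lt_of_eq h (mul_comm L (q-1))
    have hε₂mem : ε₂ ∈ Set.Ioo (0:ℝ) (q-1) := ⟨hε₂0, hε₂q⟩
    have hqε0 : 0 < q - ε₂ := by linarith
    -- upper bound on grand norm of the indicator
    have hupper : grandNorm p θ₁ ((Set.Ioo a b).indicator 1)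
        ≤ ENNReal.ofReal (K * (δ^(1/p) * L^(-(θ₁/p)))) := by
      unfold grandNorm grandNormE
      apply iSup₂_le
      intro ε hε
      obtain ⟨hε1, hε2⟩ := hε
      have hεp : 0 < p - ε := by linarith
      rw [ind_integral ha0 hab hb1 hεp, hδeq,
        ← ENNReal.ofReal_mul (by positivity : (0:ℝ) ≤ ε^θ₁),
        ENNReal.ofReal_rpow_of_pos (mul_pos (Real.rpow_pos_of_pos hε1 _) hδ0)]
      exact ENNReal.ofReal_le_ofReal (stepA hp hθ₁ hL0 hδL hLA hε1 hε2)
    -- lower bound on grand norm of the potential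
    set lowval := ε₂^(θ₂/(q - ε₂)) * ((2:ℝ)^(α-1) * δ^α) * δ^(1/(q - ε₂)) with hlowdef
    have hC0 : (0:ℝ) < (2*δ)^(α-1)*δ := by positivity
    have hlow : ENNReal.ofReal lowval
        ≤ grandNormE q θ₂ (weylPotential α ((Set.Ioo a b).indicator 1)) := by
      unfold grandNormE
      refine le_trans ?_ (le_biSup _ hε₂mem)
      have hsub2 : Set.Ioo (a-δ) a ⊆ Set.Icc (0:ℝ) 1 :=
        fun x hx => ⟨le_trans haδ0 hx.1.le, le_trans hx.2.le ha1⟩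
      have hI : ENNReal.ofReal ((2*δ)^(α-1)*δ) ^ (q - ε₂) * ENNReal.ofReal δ
          ≤ ∫⁻ x in Set.Icc (0:ℝ) 1,
              weylPotential α ((Set.Ioo a b).indicator 1) x ^ (q - ε₂) := by
        calc ENNReal.ofReal ((2*δ)^(α-1)*δ) ^ (q - ε₂) * ENNReal.ofReal δ
            = ∫⁻ _ in Set.Ioo (a-δ) a, ENNReal.ofReal ((2*δ)^(α-1)*δ) ^ (q - ε₂) := by
              rw [setLIntegral_const, Real.volume_Ioo, sub_sub_cancel]
          _ ≤ ∫⁻ x in Set.Ioo (a-δ) a,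
                weylPotential α ((Set.Ioo a b).indicator 1) x ^ (q - ε₂) := by
              apply setLIntegral_mono' measurableSet_Ioo
              intro x hx
              apply ENNReal.rpow_le_rpow _ hqε0.le
              have h := weyl_lower hα1 hab hb1 (by rw [hδeq]; exact hx.1) hx.2
              rw [hδeq] at h
              exact h
          _ ≤ _ := lintegral_mono_set hsub2
      have e1 : ENNReal.ofReal (ε₂^θ₂)
            * (ENNReal.ofReal ((2*δ)^(α-1)*δ) ^ (q-ε₂) * ENNReal.ofReal δ)
          = ENNReal.ofReal (ε₂^θ₂ * (((2*δ)^(α-1)*δ)^(q-ε₂) * δ)) := by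
        rw [ENNReal.ofReal_rpow_of_pos hC0, ← ENNReal.ofReal_mul (by positivity),
          ← ENNReal.ofReal_mul (by positivity)]
      calc ENNReal.ofReal lowval
          = ENNReal.ofReal ((ε₂^θ₂ * (((2*δ)^(α-1)*δ)^(q-ε₂) * δ))^(1/(q-ε₂))) := by
            rw [hCid_aux hδ0 hε₂0 hqε0, hlowdef]
        _ = (ENNReal.ofReal (ε₂^θ₂ * (((2*δ)^(α-1)*δ)^(q-ε₂) * δ)))^(1/(q-ε₂)) :=
            (ENNReal.ofReal_rpow_of_pos (by positivity)).symm
        _ = (ENNReal.ofReal (ε₂^θ₂)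
              * (ENNReal.ofReal ((2*δ)^(α-1)*δ) ^ (q-ε₂) * ENNReal.ofReal δ))^(1/(q-ε₂)) := by
            rw [e1]
        _ ≤ (ENNReal.ofReal (ε₂^θ₂) * ∫⁻ x in Set.Icc (0:ℝ) 1,
              weylPotential α ((Set.Ioo a b).indicator 1) x ^ (q - ε₂))^(1/(q-ε₂)) :=
            ENNReal.rpow_le_rpow (mul_le_mul_right hI _) (by positivity)
    have hcomp : c * K * (δ^(1/p) * L^(-(θ₁/p))) < lowval := by
      rw [hlowdef, hε₂def]
      exact stepC hp hq1 hα' hθ₂ hθ₁ hβpos (by positivity) hδL hL2 hL1 hL3 hL4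
    have hlowpos : (0:ℝ) < lowval := by rw [hlowdef]; positivity
    calc ENNReal.ofReal c * grandNorm p θ₁ ((Set.Ioo a b).indicator 1)
        ≤ ENNReal.ofReal c * ENNReal.ofReal (K * (δ^(1/p) * L^(-(θ₁/p)))) :=
          mul_le_mul_right hupper _
      _ = ENNReal.ofReal (c * (K * (δ^(1/p) * L^(-(θ₁/p))))) :=
          (ENNReal.ofReal_mul hc.le).symm
      _ < ENNReal.ofReal lowval := by
          apply (ENNReal.ofReal_lt_ofReal_iff hlowpos).2
          calc c * (K * (δ^(1/p) * L^(-(θ₁/p))))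
              = c*K*(δ^(1/p) * L^(-(θ₁/p))) := by ring
            _ < lowval := hcomp
      _ ≤ _ := hlow
  refine ⟨?_, key⟩
  rintro ⟨c, hc, hbd⟩
  obtain ⟨n, hn0, hlt⟩ := key c hc
  have hmeas : Measurable ((Set.Ioo (1 - 1 / (2 * (n : ℝ))) (1 - 1 / (3 * (n : ℝ)))).indicator
      (1 : ℝ → ℝ)) := measurable_one.indicator measurableSet_Ioo
  have hnn : ∀ x, 0 ≤ ((Set.Ioo (1 - 1 / (2 * (n : ℝ))) (1 - 1 / (3 * (n : ℝ)))).indicator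
      (1 : ℝ → ℝ)) x := fun x => Set.indicator_nonneg (fun _ _ => zero_le_one) x
  exact absurd (hbd _ hmeas hnn) (not_le.2 hlt)
end

section
/- Let 1<p<∞ and θ>0. For t ∈ (0,1], define F_t(ε) = (ε^θ t)^{1/(p−ε)} for ε ∈ (0, p−1]. Then any maximizers of F_t tend to 0 as t→0⁺: for every λ>0 there exists t₀>0 such that for all t ∈ (0,t₀), every ε* ∈ (0,p−1] satisfying F_t(ε*) = sup_{0<ε≤p−1} F_t(ε) satisfies ε* < λ. -/
open Set

set_option maxHeartbeats 1000000

/-- **Maximizers tend to zero.** Let `1<p<∞`, `θ>0` and for `t ∈ (0,1]` set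
`F_t(ε) = (ε^θ t)^{1/(p-ε)}` on `(0,p-1]`. Then for every `λ>0` there is `t₀>0` such that
for every `t ∈ (0,t₀)` (with `t ≤ 1`), any `ε* ∈ (0,p-1]` at which `F_t` attains its
supremum satisfies `ε* < λ`. -/
theorem maximizers_tend_to_zero (p θ : ℝ) (hp : 1 < p) (hθ : 0 < θ) :
    ∀ lam : ℝ, 0 < lam → ∃ t₀ : ℝ, 0 < t₀ ∧
      ∀ t : ℝ, 0 < t → t ≤ 1 → t < t₀ →
        ∀ εstar : ℝ, 0 < εstar → εstar ≤ p - 1 →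
          (εstar ^ θ * t) ^ (1 / (p - εstar)) =
            sSup ((fun ε : ℝ => (ε ^ θ * t) ^ (1 / (p - ε))) '' Set.Ioc 0 (p - 1)) →
          εstar < lam := by
  intro lam hlam
  set l : ℝ := min lam (p - 1) with hl
  have hl0 : 0 < l := lt_min hlam (by linarith)
  have hlp : l ≤ p - 1 := min_le_right _ _
  set e0 : ℝ := l / 2 with he0
  have he00 : 0 < e0 := by positivity
  have he0p : e0 ≤ p - 1 := by simp only [he0]; linarith
  set b : ℝ := p - e0 with hbdef
  have hb : 0 < b := by simp only [hbdef]; linarith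
  set C : ℝ := θ * b * (|Real.log e0| + |Real.log l| + |Real.log (p - 1)|) + 1 with hC
  have hC0 : 1 ≤ C := by
    have : 0 ≤ θ * b * (|Real.log e0| + |Real.log l| + |Real.log (p - 1)|) := by positivity
    simp only [hC]; linarith
  refine ⟨min 1 (Real.exp (-(2 * C / l))), lt_min one_pos (Real.exp_pos _), ?_⟩
  intro t ht ht1 htlt εs hεs0 hεsp hsup
  by_contra hcon
  push_neg at hcon
  have hlεs : l ≤ εs := le_trans (min_le_left _ _) hcon
  -- the image set is bounded above
  have hbdd : BddAbove ((fun ε : ℝ => (ε ^ θ * t) ^ (1 / (p - ε))) '' Set.Ioc 0 (p - 1)) := by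
    refine ⟨max 1 ((p - 1) ^ θ), ?_⟩
    rintro x ⟨ε, ⟨hε0, hεp⟩, rfl⟩
    have hpε : (0 : ℝ) < p - ε := by linarith
    have hy0 : 0 < ε ^ θ * t := by positivity
    have hexp0 : 0 < 1 / (p - ε) := by positivity
    have hexp1 : 1 / (p - ε) ≤ 1 := by
      rw [div_le_one hpε]; linarith
    rcases le_or_gt (ε ^ θ * t) 1 with hy1 | hy1
    · exact le_trans (Real.rpow_le_one hy0.le hy1 hexp0.le) (le_max_left _ _)
    · refine le_trans ?_ (le_max_right _ _)
      have h1 : (ε ^ θ * t) ^ (1 / (p - ε)) ≤ (ε ^ θ * t) ^ (1 : ℝ) :=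
        Real.rpow_le_rpow_of_exponent_le hy1.le hexp1
      rw [Real.rpow_one] at h1
      have h2 : ε ^ θ ≤ (p - 1) ^ θ := Real.rpow_le_rpow hε0.le hεp hθ.le
      have h3 : ε ^ θ * t ≤ (p - 1) ^ θ := by
        calc ε ^ θ * t ≤ ε ^ θ * 1 := by
              apply mul_le_mul_of_nonneg_left ht1 (by positivity)
          _ = ε ^ θ := mul_one _
          _ ≤ (p - 1) ^ θ := h2
      linarith
  have hmem : (e0 ^ θ * t) ^ (1 / (p - e0)) ∈
      (fun ε : ℝ => (ε ^ θ * t) ^ (1 / (p - ε))) '' Set.Ioc 0 (p - 1) :=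
    ⟨e0, ⟨he00, he0p⟩, rfl⟩
  have hle : (e0 ^ θ * t) ^ (1 / (p - e0)) ≤ (εs ^ θ * t) ^ (1 / (p - εs)) := by
    rw [hsup]; exact le_csSup hbdd hmem
  set a : ℝ := p - εs with hadef
  have ha : 0 < a := by simp only [hadef]; linarith
  have hab : a ≤ b := by simp only [hadef, hbdef]; linarith
  have hba2 : l / 2 ≤ b - a := by simp only [hadef, hbdef, he0]; linarith
  have hy1 : 0 < e0 ^ θ * t := by positivity
  have hy2 : 0 < εs ^ θ * t := by positivity
  -- take logarithms
  have hlog : (1 / b) * (θ * Real.log e0 + Real.log t)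
      ≤ (1 / a) * (θ * Real.log εs + Real.log t) := by
    have h := Real.log_le_log (Real.rpow_pos_of_pos hy1 _) hle
    rw [Real.log_rpow hy1, Real.log_rpow hy2, Real.log_mul (by positivity) ht.ne',
      Real.log_mul (by positivity) ht.ne', Real.log_rpow he00, Real.log_rpow hεs0] at h
    exact h
  set L : ℝ := Real.log t with hLdef
  set A : ℝ := Real.log εs with hAdef
  set B0 : ℝ := Real.log e0 with hB0def
  have hfin : (θ * B0 + L) * a ≤ (θ * A + L) * b := by
    have h1 : (θ * B0 + L) / b ≤ (θ * A + L) / a := by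
      rw [div_eq_inv_mul, div_eq_inv_mul, ← one_div, ← one_div]
      exact hlog
    exact (div_le_div_iff₀ hb ha).mp h1
  -- L is very negative
  have hLneg : L < 0 := Real.log_neg ht (lt_of_lt_of_le htlt (min_le_left _ _))
  have hLlt : L < -(2 * C / l) := by
    have h := Real.log_lt_log ht (lt_of_lt_of_le htlt (min_le_right _ _))
    rwa [Real.log_exp] at h
  -- bounds on logs
  have hA1 : Real.log l ≤ A := Real.log_le_log hl0 hlεs
  have hA2 : A ≤ Real.log (p - 1) := Real.log_le_log hεs0 hεsp
  have hAabs : |A| ≤ |Real.log l| + |Real.log (p - 1)| := by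
    rw [abs_le]
    constructor
    · have := neg_abs_le (Real.log l)
      have := abs_nonneg (Real.log (p - 1))
      linarith
    · have := le_abs_self (Real.log (p - 1))
      have := abs_nonneg (Real.log l)
      linarith
  -- key lower bound: θ * (B0 * a - A * b) ≥ -(C - 1)
  have hkey : -(C - 1) ≤ θ * (B0 * a - A * b) := by
    have h1 : -(b * |B0|) ≤ B0 * a := by
      have h1a : (-|B0|) * a ≤ B0 * a :=
        mul_le_mul_of_nonneg_right (neg_abs_le _) ha.le
      have h1b : (-|B0|) * b ≤ (-|B0|) * a := by
        have : -|B0| ≤ 0 := neg_nonpos_of_nonneg (abs_nonneg _)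
        exact mul_le_mul_of_nonpos_left hab this
      calc -(b * |B0|) = (-|B0|) * b := by ring
        _ ≤ (-|B0|) * a := h1b
        _ ≤ B0 * a := h1a
    have h2 : A * b ≤ b * (|Real.log l| + |Real.log (p - 1)|) := by
      have h := le_trans (le_abs_self A) hAabs
      calc A * b ≤ (|Real.log l| + |Real.log (p - 1)|) * b :=
            mul_le_mul_of_nonneg_right h hb.le
        _ = b * (|Real.log l| + |Real.log (p - 1)|) := by ring
    have h3 : -(b * (|B0| + |Real.log l| + |Real.log (p - 1)|)) ≤ B0 * a - A * b := by
      linarith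
    have h4 := mul_le_mul_of_nonneg_left h3 hθ.le
    have hC' : C - 1 = θ * b * (|B0| + |Real.log l| + |Real.log (p - 1)|) := by
      rw [hC, hB0def]; ring
    rw [hC']
    calc -(θ * b * (|B0| + |Real.log l| + |Real.log (p - 1)|))
        = θ * (-(b * (|B0| + |Real.log l| + |Real.log (p - 1)|))) := by ring
      _ ≤ θ * (B0 * a - A * b) := h4
  -- combine: (b - a) * L ≥ θ * (B0 * a - A * b)
  have hcomb : θ * (B0 * a - A * b) ≤ (b - a) * L := by nlinarith [hfin]
  have hhalf : (b - a) * L ≤ (l / 2) * L := by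
    nlinarith [mul_nonneg (by linarith : (0:ℝ) ≤ b - a - l / 2) (by linarith : (0:ℝ) ≤ -L)]
  -- contradiction
  have hlL : l * L < -(2 * C) := by
    have := mul_lt_mul_of_pos_left hLlt hl0
    rw [mul_neg, mul_div_assoc'] at this
    calc l * L < -(l * (2 * C) / l) := this
      _ = -(2 * C) := by rw [mul_div_assoc, mul_div_assoc]; field_simp
  nlinarith
end
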